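/- arXiv:math/0606586 — 5 statements merged into one kernel-verified Lean document; each statement's English description precedes it below -/
import Mathlib

section
/- Let B ⊆ A be an entwined C-extension, let C be coseparable with cointegral δ, and suppose the lifted canonical map κ: A⊗A → A⊗C, a⊗a' ↦ a·ρ(a'), is surjective, with a k-linear section σ: C → A⊗A satisfying κ∘σ(c) = 1⊗c for all c ∈ C. Define γ = (δ⊗A)∘(C⊗λ): C⊗A → A, α = (A⊗δ)∘(ρ⊗C): A⊗C → A, and ℓ = (γ⊗α)∘(C⊗σ⊗C)∘(Δ⊗C)∘Δ: C → A⊗A. Then ℓ is a strong connection form, i.e. (a) κ∘ℓ(c) = 1⊗c for all c ∈ C; (b) (ℓ⊗C)∘Δ = (A⊗ρ)∘ℓ; (c) (C⊗ℓ)∘Δ = (λ⊗A)∘ℓ. -/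
open TensorProduct LinearMap

set_option linter.unusedSectionVars false

noncomputable section

variable {k : Type*} [Field k]
variable {A : Type*} [Ring A] [Algebra k A]
variable {C : Type*} [AddCommGroup C] [Module k C] [Coalgebra k C]

/-- The map `(μ ⊗ C) ∘ (A ⊗ ψ)` on `(A ⊗ C) ⊗ A`, the right hand side of the
entwining compatibility conditions. -/
def entRHS (ψ : C ⊗[k] A →ₗ[k] A ⊗[k] C) : (A ⊗[k] C) ⊗[k] A →ₗ[k] A ⊗[k] C :=
  rTensor C (mul' k A) ∘ₗ (TensorProduct.assoc k A A C).symm.toLinearMap ∘ₗ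
    lTensor A ψ ∘ₗ (TensorProduct.assoc k A C A).toLinearMap

/-- A right-right entwining map `ψ : C ⊗ A → A ⊗ C`. -/
structure IsEntwining (ψ : C ⊗[k] A →ₗ[k] A ⊗[k] C) : Prop where
  mul_compat : ∀ (c : C) (a a' : A), ψ (c ⊗ₜ (a * a')) = entRHS ψ (ψ (c ⊗ₜ a) ⊗ₜ a')
  one_compat : ∀ c : C, ψ (c ⊗ₜ 1) = (1 : A) ⊗ₜ c
  comul_compat : ∀ (c : C) (a : A),
    lTensor A (Coalgebra.comul (R := k)) (ψ (c ⊗ₜ a)) =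
      (TensorProduct.assoc k A C C)
        (rTensor C ψ ((TensorProduct.assoc k C A C).symm
          (lTensor C ψ ((TensorProduct.assoc k C C A)
            ((Coalgebra.comul (R := k) c) ⊗ₜ a)))))
  counit_compat : ∀ (c : C) (a : A),
    (TensorProduct.rid k A) (lTensor A (Coalgebra.counit (R := k)) (ψ (c ⊗ₜ a))) =
      Coalgebra.counit (R := k) c • a

/-- `ρ : A → A ⊗ C` is a right `C`-coaction. -/
structure IsRightCoaction (ρ : A →ₗ[k] A ⊗[k] C) : Prop where
  coassoc : ∀ a : A,
    (TensorProduct.assoc k A C C) (rTensor C ρ (ρ a)) =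
      lTensor A (Coalgebra.comul (R := k)) (ρ a)
  counit_id : ∀ a : A,
    (TensorProduct.rid k A) (lTensor A (Coalgebra.counit (R := k)) (ρ a)) = a

/-- An entwined `C`-extension: a right `C`-comodule algebra structure on `A` given by a
bijective entwining map `ψ` (with inverse `ψinv`) and a coaction `ρ` satisfying
`ρ(a ã) = a₍₀₎ ψ(a₍₁₎ ⊗ ã)`. -/
structure IsEntwinedExtension (ψ : C ⊗[k] A →ₗ[k] A ⊗[k] C)
    (ψinv : A ⊗[k] C →ₗ[k] C ⊗[k] A) (ρ : A →ₗ[k] A ⊗[k] C) : Prop where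
  entwining : IsEntwining ψ
  coaction : IsRightCoaction ρ
  left_inv : ∀ x : C ⊗[k] A, ψinv (ψ x) = x
  right_inv : ∀ y : A ⊗[k] C, ψ (ψinv y) = y
  mul_coact : ∀ a b : A, ρ (a * b) = entRHS ψ (ρ a ⊗ₜ b)

/-- The induced left coaction `λ(a) = ψ⁻¹(a · ρ(1))`. -/
def leftCoact (ψinv : A ⊗[k] C →ₗ[k] C ⊗[k] A) (ρ : A →ₗ[k] A ⊗[k] C) :
    A →ₗ[k] C ⊗[k] A :=
  ψinv ∘ₗ rTensor C (mul' k A) ∘ₗ (TensorProduct.assoc k A A C).symm.toLinearMap ∘ₗ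
    (TensorProduct.mk k A (A ⊗[k] C)).flip (ρ 1)

/-- The lifted canonical map `κ : A ⊗ A → A ⊗ C`, `a ⊗ a' ↦ a · ρ(a')`. -/
def kappaMap (ρ : A →ₗ[k] A ⊗[k] C) : A ⊗[k] A →ₗ[k] A ⊗[k] C :=
  rTensor C (mul' k A) ∘ₗ (TensorProduct.assoc k A A C).symm.toLinearMap ∘ₗ lTensor A ρ

/-- A cointegral on the coalgebra `C`: `δ(c₍₁₎ ⊗ c₍₂₎) = ε(c)` and
`c₍₁₎ δ(c₍₂₎ ⊗ c') = δ(c ⊗ c'₍₁₎) c'₍₂₎`. -/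
def IsCointegral (δ : C ⊗[k] C →ₗ[k] k) : Prop :=
  (∀ c : C, δ (Coalgebra.comul (R := k) c) = Coalgebra.counit (R := k) c) ∧
  (∀ c c' : C,
    (TensorProduct.rid k C) (lTensor C δ ((TensorProduct.assoc k C C C)
      ((Coalgebra.comul (R := k) c) ⊗ₜ c'))) =
    (TensorProduct.lid k C) (rTensor C δ ((TensorProduct.assoc k C C C).symm
      (c ⊗ₜ (Coalgebra.comul (R := k) c')))))

/-- `γ = (δ ⊗ A) ∘ (C ⊗ λ) : C ⊗ A → A`. -/
def gammaMap (δ : C ⊗[k] C →ₗ[k] k) (lam : A →ₗ[k] C ⊗[k] A) : C ⊗[k] A →ₗ[k] A :=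
  (TensorProduct.lid k A).toLinearMap ∘ₗ rTensor A δ ∘ₗ
    (TensorProduct.assoc k C C A).symm.toLinearMap ∘ₗ lTensor C lam

/-- `α = (A ⊗ δ) ∘ (ρ ⊗ C) : A ⊗ C → A`. -/
def alphaMap (δ : C ⊗[k] C →ₗ[k] k) (ρ : A →ₗ[k] A ⊗[k] C) : A ⊗[k] C →ₗ[k] A :=
  (TensorProduct.rid k A).toLinearMap ∘ₗ lTensor A δ ∘ₗ
    (TensorProduct.assoc k A C C).toLinearMap ∘ₗ rTensor C ρ

/-- `ℓ = (γ ⊗ α) ∘ (C ⊗ σ ⊗ C) ∘ (Δ ⊗ C) ∘ Δ : C → A ⊗ A`. -/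
def ellMap (σ : C →ₗ[k] A ⊗[k] A) (γ : C ⊗[k] A →ₗ[k] A) (α : A ⊗[k] C →ₗ[k] A) :
    C →ₗ[k] A ⊗[k] A :=
  TensorProduct.map γ α ∘ₗ (TensorProduct.assoc k (C ⊗[k] A) A C).toLinearMap ∘ₗ
    rTensor C (TensorProduct.assoc k C A A).symm.toLinearMap ∘ₗ
    rTensor C (lTensor C σ) ∘ₗ rTensor C (Coalgebra.comul (R := k)) ∘ₗ
    Coalgebra.comul (R := k)

/-! ### Auxiliary lemmas -/

section Aux

variable (ψ : C ⊗[k] A →ₗ[k] A ⊗[k] C) (ψinv : A ⊗[k] C →ₗ[k] C ⊗[k] A)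
  (ρ : A →ₗ[k] A ⊗[k] C)

lemma rT_mul (a : A) (y : A ⊗[k] C) :
    rTensor C (mul' k A) ((TensorProduct.assoc k A A C).symm (a ⊗ₜ y)) =
      rTensor C (mulLeft k a) y := by
  induction y using TensorProduct.induction_on with
  | zero => simp
  | tmul u d => simp
  | add y1 y2 h1 h2 => simp only [tmul_add, map_add, h1, h2]

lemma kappa_tmul (a b : A) :
    kappaMap ρ (a ⊗ₜ b) = rTensor C (mulLeft k a) (ρ b) := by
  simp only [kappaMap, coe_comp, Function.comp_apply, LinearEquiv.coe_coe, lTensor_tmul]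
  exact rT_mul a (ρ b)

lemma entRHS_tmul (u : A) (c : C) (b : A) :
    entRHS ψ ((u ⊗ₜ c) ⊗ₜ b) = rTensor C (mulLeft k u) (ψ (c ⊗ₜ b)) := by
  simp only [entRHS, coe_comp, Function.comp_apply, LinearEquiv.coe_coe, assoc_tmul,
    lTensor_tmul]
  exact rT_mul u (ψ (c ⊗ₜ b))

lemma lam_eq (a : A) :
    leftCoact ψinv ρ a = ψinv (kappaMap ρ (a ⊗ₜ 1)) := by
  simp only [leftCoact, kappaMap, coe_comp, Function.comp_apply, LinearEquiv.coe_coe,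
    lTensor_tmul, flip_apply, mk_apply]

variable {ψ ψinv ρ}

lemma psi_lam (hext : IsEntwinedExtension ψ ψinv ρ) (a : A) :
    ψ (leftCoact ψinv ρ a) = kappaMap ρ (a ⊗ₜ 1) := by
  rw [lam_eq ψinv ρ, hext.right_inv]

lemma entRHS_mulLeft (a : A) (y : A ⊗[k] C) (b : A) :
    entRHS ψ (rTensor C (mulLeft k a) y ⊗ₜ b) =
      rTensor C (mulLeft k a) (entRHS ψ (y ⊗ₜ b)) := by
  induction y using TensorProduct.induction_on with
  | zero => simp
  | tmul u c =>
    rw [rTensor_tmul, mulLeft_apply, entRHS_tmul, entRHS_tmul, mulLeft_mul, rTensor_comp,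
      coe_comp, Function.comp_apply]
  | add y1 y2 h1 h2 => simp only [map_add, add_tmul, h1, h2]

lemma rho_one_mul (hext : IsEntwinedExtension ψ ψinv ρ) (b : A) :
    entRHS ψ (ρ 1 ⊗ₜ b) = ρ b := by
  simpa using (hext.mul_coact 1 b).symm

lemma psi_mul_right (hent : IsEntwining ψ) (u : A) (w : C ⊗[k] A) :
    ψ (lTensor C (mul' k A) ((TensorProduct.assoc k C A A) (w ⊗ₜ u))) =
      entRHS ψ (ψ w ⊗ₜ u) := by
  induction w using TensorProduct.induction_on with
  | zero => simp
  | tmul c x => simpa using hent.mul_compat c x u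
  | add w1 w2 h1 h2 => simp only [add_tmul, map_add, h1, h2]

lemma key_I (hext : IsEntwinedExtension ψ ψinv ρ) (a u : A) :
    ψ (lTensor C (mul' k A) ((TensorProduct.assoc k C A A) (leftCoact ψinv ρ a ⊗ₜ u))) =
      kappaMap ρ (a ⊗ₜ u) := by
  rw [psi_mul_right hext.entwining, psi_lam hext, kappa_tmul, entRHS_mulLeft,
    rho_one_mul hext, ← kappa_tmul]

lemma psiinv_kappa (hext : IsEntwinedExtension ψ ψinv ρ) (a u : A) :
    ψinv (kappaMap ρ (a ⊗ₜ u)) =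
      lTensor C (mul' k A) ((TensorProduct.assoc k C A A) (leftCoact ψinv ρ a ⊗ₜ u)) := by
  rw [← key_I hext, hext.left_inv]

lemma psiinv_one (hext : IsEntwinedExtension ψ ψinv ρ) (c : C) :
    ψinv ((1 : A) ⊗ₜ c) = c ⊗ₜ 1 := by
  rw [← hext.entwining.one_compat, hext.left_inv]

lemma comul_compat_all (hent : IsEntwining ψ) (x : C ⊗[k] A) :
    lTensor A (Coalgebra.comul (R := k)) (ψ x) =
      (TensorProduct.assoc k A C C)
        (rTensor C ψ ((TensorProduct.assoc k C A C).symm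
          (lTensor C ψ ((TensorProduct.assoc k C C A)
            (rTensor A (Coalgebra.comul (R := k)) x))))) := by
  induction x using TensorProduct.induction_on with
  | zero => simp
  | tmul c a => simpa using hent.comul_compat c a
  | add x1 x2 h1 h2 => simp only [map_add, h1, h2]

lemma rT_cancel (hext : IsEntwinedExtension ψ ψinv ρ) (t : (C ⊗[k] A) ⊗[k] C) :
    rTensor C ψinv (rTensor C ψ t) = t := by
  rw [← LinearMap.comp_apply, ← rTensor_comp,
    show ψinv ∘ₗ ψ = LinearMap.id from LinearMap.ext hext.left_inv, rTensor_id,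
    LinearMap.id_apply]

lemma lT_cancel (hext : IsEntwinedExtension ψ ψinv ρ) (t : C ⊗[k] (C ⊗[k] A)) :
    lTensor C ψinv (lTensor C ψ t) = t := by
  rw [← LinearMap.comp_apply, ← lTensor_comp,
    show ψinv ∘ₗ ψ = LinearMap.id from LinearMap.ext hext.left_inv, lTensor_id,
    LinearMap.id_apply]

lemma psiinv_comul (hext : IsEntwinedExtension ψ ψinv ρ) (z : A ⊗[k] C) :
    rTensor A (Coalgebra.comul (R := k)) (ψinv z) =
      (TensorProduct.assoc k C C A).symm
        (lTensor C ψinv ((TensorProduct.assoc k C A C)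
          (rTensor C ψinv ((TensorProduct.assoc k A C C).symm
            (lTensor A (Coalgebra.comul (R := k)) z))))) := by
  conv_rhs => rw [← hext.right_inv z]
  rw [comul_compat_all hext.entwining, LinearEquiv.symm_apply_apply, rT_cancel hext,
    LinearEquiv.apply_symm_apply, lT_cancel hext, LinearEquiv.symm_apply_apply]

/-- `lmul2 w u = w ·₂ u`, multiplication on the second tensor factor. -/
def lmul2 (w : C ⊗[k] A) : A →ₗ[k] C ⊗[k] A :=
  lTensor C (mul' k A) ∘ₗ (TensorProduct.assoc k C A A).toLinearMap ∘ₗ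
    TensorProduct.mk k (C ⊗[k] A) A w

lemma lmul2_apply (w : C ⊗[k] A) (u : A) :
    lmul2 w u = lTensor C (mul' k A) ((TensorProduct.assoc k C A A) (w ⊗ₜ u)) := rfl

lemma lmul2_add (w1 w2 : C ⊗[k] A) : lmul2 (w1 + w2) = lmul2 w1 + lmul2 w2 := by
  refine LinearMap.ext fun u => ?_
  simp only [lmul2_apply, LinearMap.add_apply, add_tmul, map_add]

lemma lmul2_zero : lmul2 (0 : C ⊗[k] A) = 0 := by
  refine LinearMap.ext fun u => ?_
  simp only [lmul2_apply, zero_tmul, map_zero, LinearMap.zero_apply]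

/-- `mulRho y p = p · y`, multiplication on the first tensor factor. -/
def mulRho (y : A ⊗[k] C) : A →ₗ[k] A ⊗[k] C :=
  rTensor C (mul' k A) ∘ₗ (TensorProduct.assoc k A A C).symm.toLinearMap ∘ₗ
    (TensorProduct.mk k A (A ⊗[k] C)).flip y

lemma mulRho_apply (y : A ⊗[k] C) (p : A) : mulRho y p = rTensor C (mulLeft k p) y := by
  simp only [mulRho, coe_comp, Function.comp_apply, flip_apply, mk_apply,
    LinearEquiv.coe_coe]
  exact rT_mul p y

lemma mulRho_add (y1 y2 : A ⊗[k] C) : mulRho (y1 + y2) = mulRho y1 + mulRho y2 := by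
  refine LinearMap.ext fun p => ?_
  simp only [mulRho_apply, LinearMap.add_apply, map_add]

lemma mulRho_zero : mulRho (0 : A ⊗[k] C) = 0 := by
  refine LinearMap.ext fun p => ?_
  simp only [mulRho_apply, map_zero, LinearMap.zero_apply]

lemma W_aux (hext : IsEntwinedExtension ψ ψinv ρ) (p : A) (y : A ⊗[k] C) :
    rTensor C ψinv ((TensorProduct.assoc k A C C).symm
      (rTensor (C ⊗[k] C) (mulLeft k p) ((TensorProduct.assoc k A C C) (rTensor C ρ y)))) =
      rTensor C (lmul2 (leftCoact ψinv ρ p)) y := by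
  induction y using TensorProduct.induction_on with
  | zero => simp
  | tmul u d =>
    have sub : ∀ v : A ⊗[k] C,
        rTensor C ψinv ((TensorProduct.assoc k A C C).symm
          (rTensor (C ⊗[k] C) (mulLeft k p) ((TensorProduct.assoc k A C C) (v ⊗ₜ d)))) =
        ψinv (rTensor C (mulLeft k p) v) ⊗ₜ d := by
      intro v
      induction v using TensorProduct.induction_on with
      | zero => simp
      | tmul r e => simp
      | add v1 v2 h1 h2 => simp only [add_tmul, map_add, h1, h2]
    rw [rTensor_tmul, sub (ρ u), ← kappa_tmul, psiinv_kappa hext, rTensor_tmul,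
      lmul2_apply]
  | add y1 y2 h1 h2 => simp only [map_add, h1, h2]

lemma W (hext : IsEntwinedExtension ψ ψinv ρ) (p b : A) :
    rTensor C ψinv ((TensorProduct.assoc k A C C).symm
      (lTensor A (Coalgebra.comul (R := k)) (kappaMap ρ (p ⊗ₜ b)))) =
      rTensor C (lmul2 (leftCoact ψinv ρ p)) (ρ b) := by
  rw [kappa_tmul, ← LinearMap.comp_apply, lTensor_comp_rTensor, ← rTensor_comp_lTensor,
    LinearMap.comp_apply, ← hext.coaction.coassoc b]
  exact W_aux hext p (ρ b)

lemma D_aux (w : C ⊗[k] A) (y : A ⊗[k] C) :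
    lTensor C ψinv ((TensorProduct.assoc k C A C) (rTensor C (lmul2 w) y)) =
      lTensor C (ψinv ∘ₗ mulRho y) w := by
  induction w using TensorProduct.induction_on with
  | zero => simp [lmul2_zero]
  | tmul c' p' =>
    induction y using TensorProduct.induction_on with
    | zero => simp [mulRho_zero]
    | tmul u d =>
      simp only [lmul2_apply, mulRho_apply, rTensor_tmul, lTensor_tmul, assoc_tmul,
        mul'_apply, mulLeft_apply, LinearMap.comp_apply]
    | add y1 y2 h1 h2 =>
      simp only [map_add, h1, h2, mulRho_add, LinearMap.comp_add, lTensor_add,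
        LinearMap.add_apply]
  | add w1 w2 h1 h2 =>
    simp only [lmul2_add, rTensor_add, LinearMap.add_apply, map_add, h1, h2]

lemma lam_coassoc (hext : IsEntwinedExtension ψ ψinv ρ) (a : A) :
    rTensor A (Coalgebra.comul (R := k)) (leftCoact ψinv ρ a) =
      (TensorProduct.assoc k C C A).symm
        (lTensor C (leftCoact ψinv ρ) (leftCoact ψinv ρ a)) := by
  have h1 : ψinv ∘ₗ mulRho (ρ 1) = leftCoact ψinv ρ := by
    refine LinearMap.ext fun p => ?_
    rw [LinearMap.comp_apply, mulRho_apply, ← kappa_tmul, ← lam_eq]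
  conv_lhs => rw [lam_eq ψinv ρ, psiinv_comul hext, W hext, D_aux, h1]

/-! #### `ρ ∘ α` and `λ ∘ γ` -/

variable (δ : C ⊗[k] C →ₗ[k] k)

/-- `fmap δ y c₁ = (A ⊗ δ)(y ⊗ c₁)` -/
def fmap (y : A ⊗[k] C) : C →ₗ[k] A :=
  (TensorProduct.rid k A).toLinearMap ∘ₗ lTensor A δ ∘ₗ
    (TensorProduct.assoc k A C C).toLinearMap ∘ₗ TensorProduct.mk k (A ⊗[k] C) C y

lemma fmap_apply (y : A ⊗[k] C) (c1 : C) :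
    fmap δ y c1 = (TensorProduct.rid k A) (lTensor A δ
      ((TensorProduct.assoc k A C C) (y ⊗ₜ c1))) := rfl

lemma fmap_add (y1 y2 : A ⊗[k] C) : fmap δ (y1 + y2) = fmap δ y1 + fmap δ y2 := by
  refine LinearMap.ext fun c1 => ?_
  simp only [fmap_apply, LinearMap.add_apply, add_tmul, map_add]

lemma fmap_zero : fmap δ (0 : A ⊗[k] C) = 0 := by
  refine LinearMap.ext fun c1 => ?_
  simp only [fmap_apply, zero_tmul, map_zero, LinearMap.zero_apply]

/-- `hmap δ w d = (δ ⊗ C)(d ⊗ w)` -/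
def hmap (w : C ⊗[k] C) : C →ₗ[k] C :=
  (TensorProduct.lid k C).toLinearMap ∘ₗ rTensor C δ ∘ₗ
    (TensorProduct.assoc k C C C).symm.toLinearMap ∘ₗ (TensorProduct.mk k C (C ⊗[k] C)).flip w

lemma hmap_apply (w : C ⊗[k] C) (d : C) :
    hmap δ w d = (TensorProduct.lid k C) (rTensor C δ
      ((TensorProduct.assoc k C C C).symm (d ⊗ₜ w))) := rfl

lemma hmap_add (w1 w2 : C ⊗[k] C) : hmap δ (w1 + w2) = hmap δ w1 + hmap δ w2 := by
  refine LinearMap.ext fun d => ?_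
  simp only [hmap_apply, LinearMap.add_apply, tmul_add, map_add]

lemma hmap_zero : hmap δ (0 : C ⊗[k] C) = 0 := by
  refine LinearMap.ext fun d => ?_
  simp only [hmap_apply, tmul_zero, map_zero, LinearMap.zero_apply]

/-- `gmap δ c d = (C ⊗ δ)(Δ d ⊗ c)` -/
def gmap (c : C) : C →ₗ[k] C :=
  (TensorProduct.rid k C).toLinearMap ∘ₗ lTensor C δ ∘ₗ
    (TensorProduct.assoc k C C C).toLinearMap ∘ₗ (TensorProduct.mk k (C ⊗[k] C) C).flip c ∘ₗ
    Coalgebra.comul (R := k)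

lemma gmap_apply (c d : C) :
    gmap δ c d = (TensorProduct.rid k C) (lTensor C δ
      ((TensorProduct.assoc k C C C) ((Coalgebra.comul (R := k) d) ⊗ₜ c))) := rfl

lemma N1 (y : A ⊗[k] C) (c : C) :
    ρ ((TensorProduct.rid k A) (lTensor A δ ((TensorProduct.assoc k A C C) (y ⊗ₜ c)))) =
      (TensorProduct.rid k (A ⊗[k] C)) (lTensor (A ⊗[k] C) δ
        ((TensorProduct.assoc k (A ⊗[k] C) C C) ((rTensor C ρ y) ⊗ₜ c))) := by
  induction y using TensorProduct.induction_on with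
  | zero => simp
  | tmul u d => simp
  | add y1 y2 h1 h2 => simp only [add_tmul, map_add, h1, h2]

lemma N2 (y : A ⊗[k] C) (c : C) :
    (TensorProduct.rid k (A ⊗[k] C)) (lTensor (A ⊗[k] C) δ
      ((TensorProduct.assoc k (A ⊗[k] C) C C)
        (((TensorProduct.assoc k A C C).symm
          (lTensor A (Coalgebra.comul (R := k)) y)) ⊗ₜ c))) =
      lTensor A (gmap δ c) y := by
  induction y using TensorProduct.induction_on with
  | zero => simp
  | tmul u d =>
    have sub : ∀ v : C ⊗[k] C,
        (TensorProduct.rid k (A ⊗[k] C)) (lTensor (A ⊗[k] C) δ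
          ((TensorProduct.assoc k (A ⊗[k] C) C C)
            (((TensorProduct.assoc k A C C).symm (u ⊗ₜ v)) ⊗ₜ c))) =
        u ⊗ₜ ((TensorProduct.rid k C) (lTensor C δ
          ((TensorProduct.assoc k C C C) (v ⊗ₜ c)))) := by
      intro v
      induction v using TensorProduct.induction_on with
      | zero => simp
      | tmul d1 d2 => simp [smul_tmul, tmul_smul]
      | add v1 v2 h1 h2 => simp only [add_tmul, map_add, h1, h2, tmul_add]
    rw [lTensor_tmul, sub (Coalgebra.comul (R := k) d), lTensor_tmul, gmap_apply]
  | add y1 y2 h1 h2 => simp only [map_add, add_tmul, h1, h2]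

lemma N3 (hδ : IsCointegral δ) (c : C) : gmap δ c = hmap δ (Coalgebra.comul (R := k) c) := by
  refine LinearMap.ext fun d => ?_
  rw [gmap_apply, hmap_apply]
  exact hδ.2 d c

lemma N4 (y : A ⊗[k] C) (w : C ⊗[k] C) :
    lTensor A (hmap δ w) y = rTensor C (fmap δ y) w := by
  induction y using TensorProduct.induction_on with
  | zero => simp [fmap_zero]
  | tmul u d =>
    induction w using TensorProduct.induction_on with
    | zero => simp [hmap_zero]
    | tmul c1 c2 =>
      simp only [lTensor_tmul, rTensor_tmul, hmap_apply, fmap_apply, assoc_symm_tmul,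
        assoc_tmul, lid_tmul, rid_tmul, tmul_smul, smul_tmul']
    | add w1 w2 h1 h2 =>
      simp only [hmap_add, lTensor_add, LinearMap.add_apply, map_add, h1, h2]
  | add y1 y2 h1 h2 =>
    simp only [map_add, fmap_add, rTensor_add, LinearMap.add_apply, h1, h2]

lemma alpha_eq (b : A) (c1 : C) : alphaMap δ ρ (b ⊗ₜ c1) = fmap δ (ρ b) c1 := by
  simp only [alphaMap, fmap_apply, coe_comp, Function.comp_apply, LinearEquiv.coe_coe,
    rTensor_tmul, mk_apply]

lemma rho_alpha (hext : IsEntwinedExtension ψ ψinv ρ) (hδ : IsCointegral δ)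
    (a : A) (c : C) :
    ρ (alphaMap δ ρ (a ⊗ₜ c)) =
      rTensor C (alphaMap δ ρ) ((TensorProduct.assoc k A C C).symm
        (a ⊗ₜ Coalgebra.comul (R := k) c)) := by
  have hco : rTensor C ρ (ρ a) =
      (TensorProduct.assoc k A C C).symm (lTensor A (Coalgebra.comul (R := k)) (ρ a)) := by
    rw [← hext.coaction.coassoc a, LinearEquiv.symm_apply_apply]
  have last : ∀ w : C ⊗[k] C,
      rTensor C (fmap δ (ρ a)) w =
        rTensor C (alphaMap δ ρ) ((TensorProduct.assoc k A C C).symm (a ⊗ₜ w)) := by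
    intro w
    induction w using TensorProduct.induction_on with
    | zero => simp
    | tmul c1 c2 => rw [assoc_symm_tmul, rTensor_tmul, rTensor_tmul, alpha_eq]
    | add w1 w2 h1 h2 => simp only [tmul_add, map_add, h1, h2]
  rw [alpha_eq, fmap_apply, N1, hco, N2, N3 δ hδ, N4, last]

/-- `fmap2 δ y c₂ = (δ ⊗ A)(c₂ ⊗ y)` -/
def fmap2 (y : C ⊗[k] A) : C →ₗ[k] A :=
  (TensorProduct.lid k A).toLinearMap ∘ₗ rTensor A δ ∘ₗ
    (TensorProduct.assoc k C C A).symm.toLinearMap ∘ₗ (TensorProduct.mk k C (C ⊗[k] A)).flip y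

lemma fmap2_apply (y : C ⊗[k] A) (c2 : C) :
    fmap2 δ y c2 = (TensorProduct.lid k A) (rTensor A δ
      ((TensorProduct.assoc k C C A).symm (c2 ⊗ₜ y))) := rfl

lemma fmap2_add (y1 y2 : C ⊗[k] A) : fmap2 δ (y1 + y2) = fmap2 δ y1 + fmap2 δ y2 := by
  refine LinearMap.ext fun c2 => ?_
  simp only [fmap2_apply, LinearMap.add_apply, tmul_add, map_add]

lemma fmap2_zero : fmap2 δ (0 : C ⊗[k] A) = 0 := by
  refine LinearMap.ext fun c2 => ?_
  simp only [fmap2_apply, tmul_zero, map_zero, LinearMap.zero_apply]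

/-- `hmap2 δ w d = (C ⊗ δ)(w ⊗ d)` -/
def hmap2 (w : C ⊗[k] C) : C →ₗ[k] C :=
  (TensorProduct.rid k C).toLinearMap ∘ₗ lTensor C δ ∘ₗ
    (TensorProduct.assoc k C C C).toLinearMap ∘ₗ TensorProduct.mk k (C ⊗[k] C) C w

lemma hmap2_apply (w : C ⊗[k] C) (d : C) :
    hmap2 δ w d = (TensorProduct.rid k C) (lTensor C δ
      ((TensorProduct.assoc k C C C) (w ⊗ₜ d))) := rfl

lemma hmap2_add (w1 w2 : C ⊗[k] C) : hmap2 δ (w1 + w2) = hmap2 δ w1 + hmap2 δ w2 := by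
  refine LinearMap.ext fun d => ?_
  simp only [hmap2_apply, LinearMap.add_apply, add_tmul, map_add]

lemma hmap2_zero : hmap2 δ (0 : C ⊗[k] C) = 0 := by
  refine LinearMap.ext fun d => ?_
  simp only [hmap2_apply, zero_tmul, map_zero, LinearMap.zero_apply]

/-- `gmap2 δ c d = (δ ⊗ C)(c ⊗ Δ d)` -/
def gmap2 (c : C) : C →ₗ[k] C :=
  (TensorProduct.lid k C).toLinearMap ∘ₗ rTensor C δ ∘ₗ
    (TensorProduct.assoc k C C C).symm.toLinearMap ∘ₗ TensorProduct.mk k C (C ⊗[k] C) c ∘ₗ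
    Coalgebra.comul (R := k)

lemma gmap2_apply (c d : C) :
    gmap2 δ c d = (TensorProduct.lid k C) (rTensor C δ
      ((TensorProduct.assoc k C C C).symm (c ⊗ₜ (Coalgebra.comul (R := k) d)))) := rfl

lemma Q1 (lam : A →ₗ[k] C ⊗[k] A) (y : C ⊗[k] A) (c : C) :
    lam ((TensorProduct.lid k A) (rTensor A δ ((TensorProduct.assoc k C C A).symm (c ⊗ₜ y)))) =
      (TensorProduct.lid k (C ⊗[k] A)) (rTensor (C ⊗[k] A) δ
        ((TensorProduct.assoc k C C (C ⊗[k] A)).symm (c ⊗ₜ lTensor C lam y))) := by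
  induction y using TensorProduct.induction_on with
  | zero => simp
  | tmul d u => simp
  | add y1 y2 h1 h2 => simp only [tmul_add, map_add, h1, h2]

lemma Q2 (y : C ⊗[k] A) (c : C) :
    (TensorProduct.lid k (C ⊗[k] A)) (rTensor (C ⊗[k] A) δ
      ((TensorProduct.assoc k C C (C ⊗[k] A)).symm
        (c ⊗ₜ ((TensorProduct.assoc k C C A)
          (rTensor A (Coalgebra.comul (R := k)) y))))) =
      rTensor A (gmap2 δ c) y := by
  induction y using TensorProduct.induction_on with
  | zero => simp
  | tmul d u =>
    have sub : ∀ v : C ⊗[k] C,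
        (TensorProduct.lid k (C ⊗[k] A)) (rTensor (C ⊗[k] A) δ
          ((TensorProduct.assoc k C C (C ⊗[k] A)).symm
            (c ⊗ₜ ((TensorProduct.assoc k C C A) (v ⊗ₜ u))))) =
        ((TensorProduct.lid k C) (rTensor C δ
          ((TensorProduct.assoc k C C C).symm (c ⊗ₜ v)))) ⊗ₜ u := by
      intro v
      induction v using TensorProduct.induction_on with
      | zero => simp
      | tmul v1 v2 => simp [smul_tmul']
      | add v1 v2 h1 h2 => simp only [add_tmul, tmul_add, map_add, h1, h2]
    rw [rTensor_tmul, sub (Coalgebra.comul (R := k) d), rTensor_tmul, gmap2_apply]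
  | add y1 y2 h1 h2 => simp only [map_add, tmul_add, add_tmul, h1, h2]

lemma Q3 (hδ : IsCointegral δ) (c : C) : gmap2 δ c = hmap2 δ (Coalgebra.comul (R := k) c) := by
  refine LinearMap.ext fun d => ?_
  rw [gmap2_apply, hmap2_apply]
  exact (hδ.2 c d).symm

lemma Q4 (y : C ⊗[k] A) (w : C ⊗[k] C) :
    rTensor A (hmap2 δ w) y = lTensor C (fmap2 δ y) w := by
  induction y using TensorProduct.induction_on with
  | zero => simp [fmap2_zero]
  | tmul d u =>
    induction w using TensorProduct.induction_on with
    | zero => simp [hmap2_zero]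
    | tmul c1 c2 =>
      simp only [lTensor_tmul, rTensor_tmul, hmap2_apply, fmap2_apply, assoc_symm_tmul,
        assoc_tmul, lid_tmul, rid_tmul, tmul_smul, smul_tmul']
    | add w1 w2 h1 h2 =>
      simp only [hmap2_add, lTensor_add, rTensor_add, LinearMap.add_apply, map_add, h1, h2]
  | add y1 y2 h1 h2 =>
    simp only [map_add, fmap2_add, lTensor_add, LinearMap.add_apply, h1, h2]

lemma gamma_eq (lam : A →ₗ[k] C ⊗[k] A) (c2 : C) (a : A) :
    gammaMap δ lam (c2 ⊗ₜ a) = fmap2 δ (lam a) c2 := by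
  simp only [gammaMap, fmap2_apply, coe_comp, Function.comp_apply, LinearEquiv.coe_coe,
    lTensor_tmul]

lemma lam_gamma (hext : IsEntwinedExtension ψ ψinv ρ) (hδ : IsCointegral δ)
    (c : C) (a : A) :
    leftCoact ψinv ρ (gammaMap δ (leftCoact ψinv ρ) (c ⊗ₜ a)) =
      lTensor C (gammaMap δ (leftCoact ψinv ρ))
        ((TensorProduct.assoc k C C A) ((Coalgebra.comul (R := k) c) ⊗ₜ a)) := by
  have hco : lTensor C (leftCoact ψinv ρ) (leftCoact ψinv ρ a) =
      (TensorProduct.assoc k C C A)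
        (rTensor A (Coalgebra.comul (R := k)) (leftCoact ψinv ρ a)) := by
    rw [lam_coassoc hext a, LinearEquiv.apply_symm_apply]
  have last : ∀ w : C ⊗[k] C,
      lTensor C (fmap2 δ (leftCoact ψinv ρ a)) w =
        lTensor C (gammaMap δ (leftCoact ψinv ρ))
          ((TensorProduct.assoc k C C A) (w ⊗ₜ a)) := by
    intro w
    induction w using TensorProduct.induction_on with
    | zero => simp
    | tmul c1 c2 => rw [assoc_tmul, lTensor_tmul, lTensor_tmul, gamma_eq]
    | add w1 w2 h1 h2 => simp only [add_tmul, map_add, h1, h2]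
  rw [gamma_eq, fmap2_apply, Q1, hco, Q2, Q3 δ hδ, Q4, last]

/-! #### Colinearity of `ℓ` -/

/-- `S = (assoc)⁻¹ ∘ (C ⊗ σ) ∘ Δ`. -/
def Smap (σ : C →ₗ[k] A ⊗[k] A) : C →ₗ[k] (C ⊗[k] A) ⊗[k] A :=
  (TensorProduct.assoc k C A A).symm.toLinearMap ∘ₗ lTensor C σ ∘ₗ Coalgebra.comul (R := k)

lemma Smap_apply (σ : C →ₗ[k] A ⊗[k] A) (c : C) :
    Smap σ c = (TensorProduct.assoc k C A A).symm
      (lTensor C σ (Coalgebra.comul (R := k) c)) := rfl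

/-- `N = (γ ⊗ α) ∘ assoc ∘ (S ⊗ C)`. -/
def Nmap (σ : C →ₗ[k] A ⊗[k] A) (γ : C ⊗[k] A →ₗ[k] A) (α : A ⊗[k] C →ₗ[k] A) :
    C ⊗[k] C →ₗ[k] A ⊗[k] A :=
  TensorProduct.map γ α ∘ₗ (TensorProduct.assoc k (C ⊗[k] A) A C).toLinearMap ∘ₗ
    rTensor C (Smap σ)

lemma Nmap_apply (σ : C →ₗ[k] A ⊗[k] A) (γ : C ⊗[k] A →ₗ[k] A) (α : A ⊗[k] C →ₗ[k] A)
    (z : C ⊗[k] C) :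
    Nmap σ γ α z = TensorProduct.map γ α ((TensorProduct.assoc k (C ⊗[k] A) A C)
      (rTensor C (Smap σ) z)) := rfl

lemma Nmap_tmul (σ : C →ₗ[k] A ⊗[k] A) (γ : C ⊗[k] A →ₗ[k] A) (α : A ⊗[k] C →ₗ[k] A)
    (c1 c2 : C) :
    Nmap σ γ α (c1 ⊗ₜ c2) =
      TensorProduct.map γ α ((TensorProduct.assoc k (C ⊗[k] A) A C)
        ((Smap σ c1) ⊗ₜ c2)) := rfl

lemma ell_comp (σ : C →ₗ[k] A ⊗[k] A) (γ : C ⊗[k] A →ₗ[k] A) (α : A ⊗[k] C →ₗ[k] A) :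
    ellMap σ γ α = Nmap σ γ α ∘ₗ Coalgebra.comul (R := k) := by
  refine LinearMap.ext fun c => ?_
  simp only [ellMap, Nmap, Smap, rTensor_comp, coe_comp, Function.comp_apply,
    LinearEquiv.coe_coe]

lemma lTensor_map_apply (γ : C ⊗[k] A →ₗ[k] A) (α : A ⊗[k] C →ₗ[k] A)
    (f : A →ₗ[k] A ⊗[k] C) (t : (C ⊗[k] A) ⊗[k] (A ⊗[k] C)) :
    lTensor A f (TensorProduct.map γ α t) = TensorProduct.map γ (f ∘ₗ α) t := by
  induction t using TensorProduct.induction_on with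
  | zero => simp
  | tmul m n => simp
  | add t1 t2 h1 h2 => simp only [map_add, h1, h2]

lemma rTensor_map_apply (γ : C ⊗[k] A →ₗ[k] A) (α : A ⊗[k] C →ₗ[k] A)
    (g : A →ₗ[k] C ⊗[k] A) (t : (C ⊗[k] A) ⊗[k] (A ⊗[k] C)) :
    rTensor A g (TensorProduct.map γ α t) = TensorProduct.map (g ∘ₗ γ) α t := by
  induction t using TensorProduct.induction_on with
  | zero => simp
  | tmul m n => simp
  | add t1 t2 h1 h2 => simp only [map_add, h1, h2]

/-- Right-hand version of `ρ ∘ α`. -/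
def Wb (ρ : A →ₗ[k] A ⊗[k] C) (δ : C ⊗[k] C →ₗ[k] k) : A ⊗[k] C →ₗ[k] A ⊗[k] C :=
  rTensor C (alphaMap δ ρ) ∘ₗ (TensorProduct.assoc k A C C).symm.toLinearMap ∘ₗ
    lTensor A (Coalgebra.comul (R := k))

lemma Wb_tmul (a : A) (c : C) :
    Wb ρ δ (a ⊗ₜ c) = rTensor C (alphaMap δ ρ)
      ((TensorProduct.assoc k A C C).symm (a ⊗ₜ Coalgebra.comul (R := k) c)) := rfl

lemma rho_alpha_map (hext : IsEntwinedExtension ψ ψinv ρ) (hδ : IsCointegral δ) :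
    ρ ∘ₗ alphaMap δ ρ = Wb ρ δ := by
  refine TensorProduct.ext' fun a c => ?_
  rw [LinearMap.comp_apply, Wb_tmul]
  exact rho_alpha δ hext hδ a c

def Theta (γ : C ⊗[k] A →ₗ[k] A) (α : A ⊗[k] C →ₗ[k] A) :
    ((C ⊗[k] A) ⊗[k] A) ⊗[k] (C ⊗[k] C) →ₗ[k] A ⊗[k] (A ⊗[k] C) :=
  (TensorProduct.assoc k A A C).toLinearMap ∘ₗ
    rTensor C (TensorProduct.map γ α ∘ₗ (TensorProduct.assoc k (C ⊗[k] A) A C).toLinearMap) ∘ₗ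
    (TensorProduct.assoc k ((C ⊗[k] A) ⊗[k] A) C C).symm.toLinearMap

lemma b1 (γ : C ⊗[k] A →ₗ[k] A) (s : (C ⊗[k] A) ⊗[k] A) (c2 : C) :
    TensorProduct.map γ (Wb ρ δ) ((TensorProduct.assoc k (C ⊗[k] A) A C) (s ⊗ₜ c2)) =
      Theta γ (alphaMap δ ρ) (s ⊗ₜ (Coalgebra.comul (R := k) c2)) := by
  induction s using TensorProduct.induction_on with
  | zero => simp only [zero_tmul, map_zero]
  | tmul m a' =>
    rw [assoc_tmul, map_tmul, Wb_tmul]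
    have sub : ∀ v : C ⊗[k] C,
        γ m ⊗ₜ (rTensor C (alphaMap δ ρ) ((TensorProduct.assoc k A C C).symm (a' ⊗ₜ v))) =
          Theta γ (alphaMap δ ρ) ((m ⊗ₜ a') ⊗ₜ v) := by
      intro v
      induction v using TensorProduct.induction_on with
      | zero => simp [Theta]
      | tmul v1 v2 =>
        simp only [Theta, coe_comp, Function.comp_apply, LinearEquiv.coe_coe,
          assoc_symm_tmul, rTensor_tmul, assoc_tmul, map_tmul, LinearMap.comp_apply]
      | add v1 v2 h1 h2 => simp only [tmul_add, map_add, h1, h2]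
    exact sub _
  | add s1 s2 h1 h2 => simp only [add_tmul, map_add, h1, h2]

lemma b2 (σ : C →ₗ[k] A ⊗[k] A) (γ : C ⊗[k] A →ₗ[k] A) (α : A ⊗[k] C →ₗ[k] A)
    (c1 : C) (v : C ⊗[k] C) :
    (TensorProduct.assoc k A A C) (rTensor C (Nmap σ γ α)
      ((TensorProduct.assoc k C C C).symm (c1 ⊗ₜ v))) =
      Theta γ α ((Smap σ c1) ⊗ₜ v) := by
  induction v using TensorProduct.induction_on with
  | zero => simp [Theta]
  | tmul v1 v2 =>
    simp only [Theta, coe_comp, Function.comp_apply, LinearEquiv.coe_coe, assoc_symm_tmul,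
      rTensor_tmul, Nmap_tmul]
  | add v1 v2 h1 h2 => simp only [tmul_add, map_add, h1, h2]

lemma b_core (σ : C →ₗ[k] A ⊗[k] A) (γ : C ⊗[k] A →ₗ[k] A) (z : C ⊗[k] C) :
    (TensorProduct.assoc k A A C) (rTensor C (Nmap σ γ (alphaMap δ ρ))
      ((TensorProduct.assoc k C C C).symm
        (lTensor C (Coalgebra.comul (R := k)) z))) =
      TensorProduct.map γ (Wb ρ δ) ((TensorProduct.assoc k (C ⊗[k] A) A C)
        (rTensor C (Smap σ) z)) := by
  induction z using TensorProduct.induction_on with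
  | zero => simp
  | tmul c1 c2 =>
    rw [lTensor_tmul, rTensor_tmul, b2, b1]
  | add z1 z2 h1 h2 => simp only [map_add, h1, h2]

lemma part_b (hext : IsEntwinedExtension ψ ψinv ρ) (hδ : IsCointegral δ)
    (σ : C →ₗ[k] A ⊗[k] A) (c : C) :
    (TensorProduct.assoc k A A C)
      (rTensor C (ellMap σ (gammaMap δ (leftCoact ψinv ρ)) (alphaMap δ ρ))
        (Coalgebra.comul (R := k) c)) =
      lTensor A ρ (ellMap σ (gammaMap δ (leftCoact ψinv ρ)) (alphaMap δ ρ) c) := by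
  rw [ell_comp, rTensor_comp, LinearMap.comp_apply, LinearMap.comp_apply,
    ← Coalgebra.coassoc_symm_apply, b_core, Nmap_apply, lTensor_map_apply,
    rho_alpha_map δ hext hδ]

/-- `BIG = (C ⊗ γ) ∘ assoc ∘ (Δ ⊗ A)`. -/
def BIGmap (γ : C ⊗[k] A →ₗ[k] A) : C ⊗[k] A →ₗ[k] C ⊗[k] A :=
  lTensor C γ ∘ₗ (TensorProduct.assoc k C C A).toLinearMap ∘ₗ
    rTensor A (Coalgebra.comul (R := k))

lemma BIGmap_tmul (γ : C ⊗[k] A →ₗ[k] A) (c : C) (a : A) :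
    BIGmap γ (c ⊗ₜ a) = lTensor C γ ((TensorProduct.assoc k C C A)
      ((Coalgebra.comul (R := k) c) ⊗ₜ a)) := rfl

lemma lam_gamma_map (hext : IsEntwinedExtension ψ ψinv ρ) (hδ : IsCointegral δ) :
    leftCoact ψinv ρ ∘ₗ gammaMap δ (leftCoact ψinv ρ) =
      BIGmap (gammaMap δ (leftCoact ψinv ρ)) := by
  refine TensorProduct.ext' fun c a => ?_
  rw [LinearMap.comp_apply, BIGmap_tmul]
  exact lam_gamma δ hext hδ c a

/-- The common normal form for part (c). -/
def Kc (σ : C →ₗ[k] A ⊗[k] A) (γ : C ⊗[k] A →ₗ[k] A) (α : A ⊗[k] C →ₗ[k] A) :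
    ((C ⊗[k] C) ⊗[k] C) ⊗[k] C →ₗ[k] C ⊗[k] (A ⊗[k] A) :=
  lTensor C (TensorProduct.map γ α) ∘ₗ
    lTensor C (TensorProduct.assoc k C A (A ⊗[k] C)).symm.toLinearMap ∘ₗ
    (TensorProduct.assoc k C C (A ⊗[k] (A ⊗[k] C))).toLinearMap ∘ₗ
    lTensor (C ⊗[k] C) (TensorProduct.assoc k A A C).toLinearMap ∘ₗ
    lTensor (C ⊗[k] C) (rTensor C σ) ∘ₗ
    (TensorProduct.assoc k (C ⊗[k] C) C C).toLinearMap

lemma Kc_partial (σ : C →ₗ[k] A ⊗[k] A) (γ : C ⊗[k] A →ₗ[k] A) (α : A ⊗[k] C →ₗ[k] A)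
    (v : C ⊗[k] C) (w2 z2 : C) :
    Kc σ γ α ((v ⊗ₜ w2) ⊗ₜ z2) =
      lTensor C (TensorProduct.map γ α)
        (lTensor C (TensorProduct.assoc k C A (A ⊗[k] C)).symm.toLinearMap
          ((TensorProduct.assoc k C C (A ⊗[k] (A ⊗[k] C)))
            (v ⊗ₜ ((TensorProduct.assoc k A A C) ((σ w2) ⊗ₜ z2))))) := by
  simp only [Kc, coe_comp, Function.comp_apply, LinearEquiv.coe_coe, assoc_tmul,
    lTensor_tmul, rTensor_tmul]

lemma cR_vv (γ : C ⊗[k] A →ₗ[k] A) (α : A ⊗[k] C →ₗ[k] A) (x1 : A) (t : A ⊗[k] C)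
    (v : C ⊗[k] C) :
    (TensorProduct.assoc k C A A)
      ((lTensor C γ ((TensorProduct.assoc k C C A) (v ⊗ₜ x1))) ⊗ₜ (α t)) =
      lTensor C (TensorProduct.map γ α)
        (lTensor C (TensorProduct.assoc k C A (A ⊗[k] C)).symm.toLinearMap
          ((TensorProduct.assoc k C C (A ⊗[k] (A ⊗[k] C))) (v ⊗ₜ (x1 ⊗ₜ t)))) := by
  induction v using TensorProduct.induction_on with
  | zero => simp
  | tmul v1 v2 => simp
  | add v1 v2 h1 h2 => simp only [add_tmul, map_add, h1, h2]

lemma cR_inner (γ : C ⊗[k] A →ₗ[k] A) (α : A ⊗[k] C →ₗ[k] A) (w1 z2 : C) (x : A ⊗[k] A) :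
    (TensorProduct.assoc k C A A) (TensorProduct.map (BIGmap γ) α
      ((TensorProduct.assoc k (C ⊗[k] A) A C)
        (((TensorProduct.assoc k C A A).symm (w1 ⊗ₜ x)) ⊗ₜ z2))) =
      lTensor C (TensorProduct.map γ α)
        (lTensor C (TensorProduct.assoc k C A (A ⊗[k] C)).symm.toLinearMap
          ((TensorProduct.assoc k C C (A ⊗[k] (A ⊗[k] C)))
            ((Coalgebra.comul (R := k) w1) ⊗ₜ
              ((TensorProduct.assoc k A A C) (x ⊗ₜ z2))))) := by
  induction x using TensorProduct.induction_on with
  | zero => simp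
  | tmul x1 x2 =>
    rw [assoc_symm_tmul, assoc_tmul, map_tmul, BIGmap_tmul, assoc_tmul]
    exact cR_vv γ α x1 (x2 ⊗ₜ z2) (Coalgebra.comul (R := k) w1)
  | add x1 x2 h1 h2 => simp only [tmul_add, add_tmul, map_add, h1, h2]

lemma cR (σ : C →ₗ[k] A ⊗[k] A) (γ : C ⊗[k] A →ₗ[k] A) (α : A ⊗[k] C →ₗ[k] A)
    (z2 : C) (w : C ⊗[k] C) :
    (TensorProduct.assoc k C A A) (TensorProduct.map (BIGmap γ) α
      ((TensorProduct.assoc k (C ⊗[k] A) A C)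
        (((TensorProduct.assoc k C A A).symm (lTensor C σ w)) ⊗ₜ z2))) =
      Kc σ γ α ((rTensor C (Coalgebra.comul (R := k)) w) ⊗ₜ z2) := by
  induction w using TensorProduct.induction_on with
  | zero => simp
  | tmul w1 w2 =>
    rw [lTensor_tmul, rTensor_tmul, Kc_partial]
    exact cR_inner γ α w1 z2 (σ w2)
  | add w1 w2 h1 h2 => simp only [map_add, add_tmul, h1, h2]

lemma cL_inner (σ : C →ₗ[k] A ⊗[k] A) (γ : C ⊗[k] A →ₗ[k] A) (α : A ⊗[k] C →ₗ[k] A)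
    (w1 q1 z2 : C) (x : A ⊗[k] A) :
    w1 ⊗ₜ (TensorProduct.map γ α ((TensorProduct.assoc k (C ⊗[k] A) A C)
      (((TensorProduct.assoc k C A A).symm (q1 ⊗ₜ x)) ⊗ₜ z2))) =
      lTensor C (TensorProduct.map γ α)
        (lTensor C (TensorProduct.assoc k C A (A ⊗[k] C)).symm.toLinearMap
          ((TensorProduct.assoc k C C (A ⊗[k] (A ⊗[k] C)))
            ((w1 ⊗ₜ q1) ⊗ₜ ((TensorProduct.assoc k A A C) (x ⊗ₜ z2))))) := by
  induction x using TensorProduct.induction_on with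
  | zero => simp
  | tmul x1 x2 => simp
  | add x1 x2 h1 h2 => simp only [tmul_add, add_tmul, map_add, h1, h2]

lemma cL2_inner (σ : C →ₗ[k] A ⊗[k] A) (γ : C ⊗[k] A →ₗ[k] A) (α : A ⊗[k] C →ₗ[k] A)
    (w1 z2 : C) (q : C ⊗[k] C) :
    w1 ⊗ₜ (TensorProduct.map γ α ((TensorProduct.assoc k (C ⊗[k] A) A C)
      (((TensorProduct.assoc k C A A).symm (lTensor C σ q)) ⊗ₜ z2))) =
      Kc σ γ α (((TensorProduct.assoc k C C C).symm (w1 ⊗ₜ q)) ⊗ₜ z2) := by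
  induction q using TensorProduct.induction_on with
  | zero => simp
  | tmul q1 q2 =>
    rw [lTensor_tmul, assoc_symm_tmul, Kc_partial]
    exact cL_inner σ γ α w1 q1 z2 (σ q2)
  | add q1 q2 h1 h2 => simp only [map_add, add_tmul, tmul_add, h1, h2]

lemma cL2 (σ : C →ₗ[k] A ⊗[k] A) (γ : C ⊗[k] A →ₗ[k] A) (α : A ⊗[k] C →ₗ[k] A)
    (z2 : C) (w : C ⊗[k] C) :
    lTensor C (Nmap σ γ α) ((TensorProduct.assoc k C C C) (w ⊗ₜ z2)) =
      Kc σ γ α (((TensorProduct.assoc k C C C).symm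
        (lTensor C (Coalgebra.comul (R := k)) w)) ⊗ₜ z2) := by
  induction w using TensorProduct.induction_on with
  | zero => simp
  | tmul w1 w2 =>
    rw [assoc_tmul, lTensor_tmul, lTensor_tmul, Nmap_tmul, Smap_apply]
    exact cL2_inner σ γ α w1 z2 (Coalgebra.comul (R := k) w2)
  | add w1 w2 h1 h2 => simp only [map_add, add_tmul, h1, h2]

lemma c_core (σ : C →ₗ[k] A ⊗[k] A) (γ : C ⊗[k] A →ₗ[k] A) (α : A ⊗[k] C →ₗ[k] A)
    (z : C ⊗[k] C) :
    lTensor C (Nmap σ γ α) ((TensorProduct.assoc k C C C)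
      (rTensor C (Coalgebra.comul (R := k)) z)) =
      (TensorProduct.assoc k C A A) (TensorProduct.map (BIGmap γ) α
        ((TensorProduct.assoc k (C ⊗[k] A) A C) (rTensor C (Smap σ) z))) := by
  induction z using TensorProduct.induction_on with
  | zero => simp
  | tmul z1 z2 =>
    rw [rTensor_tmul, rTensor_tmul, cL2, Coalgebra.coassoc_symm_apply, Smap_apply, cR]
  | add z1 z2 h1 h2 => simp only [map_add, h1, h2]

lemma part_c (hext : IsEntwinedExtension ψ ψinv ρ) (hδ : IsCointegral δ)
    (σ : C →ₗ[k] A ⊗[k] A) (c : C) :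
    lTensor C (ellMap σ (gammaMap δ (leftCoact ψinv ρ)) (alphaMap δ ρ))
      (Coalgebra.comul (R := k) c) =
      (TensorProduct.assoc k C A A)
        (rTensor A (leftCoact ψinv ρ)
          (ellMap σ (gammaMap δ (leftCoact ψinv ρ)) (alphaMap δ ρ) c)) := by
  rw [ell_comp, lTensor_comp, LinearMap.comp_apply, LinearMap.comp_apply,
    ← Coalgebra.coassoc_apply, c_core, Nmap_apply, rTensor_map_apply,
    lam_gamma_map δ hext hδ]

/-! #### Normalisation: `μ ∘ ℓ = ε(·) • 1` -/

lemma E2c (q : A) (w : C ⊗[k] A) :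
    lTensor C (kappaMap ρ) ((TensorProduct.assoc k C A A) (w ⊗ₜ q)) =
      lTensor C (mulRho (ρ q)) w := by
  induction w using TensorProduct.induction_on with
  | zero => simp
  | tmul c' p' => rw [assoc_tmul, lTensor_tmul, lTensor_tmul, kappa_tmul, mulRho_apply]
  | add w1 w2 h1 h2 => simp only [add_tmul, map_add, h1, h2]

lemma E2b (w : C ⊗[k] A) (y : A ⊗[k] C) :
    (TensorProduct.assoc k C A C) (rTensor C (lmul2 w) y) = lTensor C (mulRho y) w := by
  induction w using TensorProduct.induction_on with
  | zero => simp [lmul2_zero]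
  | tmul c' p' =>
    induction y using TensorProduct.induction_on with
    | zero => simp [mulRho_zero]
    | tmul u d =>
      simp only [lmul2_apply, mulRho_apply, rTensor_tmul, lTensor_tmul, assoc_tmul,
        mul'_apply, mulLeft_apply]
    | add y1 y2 h1 h2 =>
      simp only [map_add, h1, h2, mulRho_add, lTensor_add, LinearMap.add_apply]
  | add w1 w2 h1 h2 =>
    simp only [lmul2_add, rTensor_add, LinearMap.add_apply, map_add, h1, h2]

/-- The map `β : x ↦ x¹₍₋₁₎ ⊗ (x¹₍₀₎ · ρ(x²))`. -/
def Bmap (ψinv : A ⊗[k] C →ₗ[k] C ⊗[k] A) (ρ : A →ₗ[k] A ⊗[k] C) :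
    A ⊗[k] A →ₗ[k] C ⊗[k] (A ⊗[k] C) :=
  lTensor C (kappaMap ρ) ∘ₗ (TensorProduct.assoc k C A A).toLinearMap ∘ₗ
    rTensor A (leftCoact ψinv ρ)

lemma E2 (hext : IsEntwinedExtension ψ ψinv ρ) (x : A ⊗[k] A) :
    Bmap ψinv ρ x =
      (TensorProduct.assoc k C A C) (rTensor C ψinv ((TensorProduct.assoc k A C C).symm
        (lTensor A (Coalgebra.comul (R := k)) (kappaMap ρ x)))) := by
  induction x using TensorProduct.induction_on with
  | zero => simp
  | tmul p q =>
    rw [W hext p q, E2b]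
    simp only [Bmap, coe_comp, Function.comp_apply, LinearEquiv.coe_coe, rTensor_tmul]
    rw [E2c]
  | add x1 x2 h1 h2 => simp only [map_add, h1, h2]

/-- The contraction `(δ ⊗ A ⊗ δ)`-type map, inner part. -/
def xi1 (δ : C ⊗[k] C →ₗ[k] k) : C ⊗[k] (C ⊗[k] (A ⊗[k] C)) →ₗ[k] A ⊗[k] C :=
  (TensorProduct.lid k (A ⊗[k] C)).toLinearMap ∘ₗ rTensor (A ⊗[k] C) δ ∘ₗ
    (TensorProduct.assoc k C C (A ⊗[k] C)).symm.toLinearMap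

/-- The contraction `(δ ⊗ A ⊗ δ)`-type map. -/
def ximap (δ : C ⊗[k] C →ₗ[k] k) : (C ⊗[k] (C ⊗[k] (A ⊗[k] C))) ⊗[k] C →ₗ[k] A :=
  (TensorProduct.rid k A).toLinearMap ∘ₗ lTensor A δ ∘ₗ
    (TensorProduct.assoc k A C C).toLinearMap ∘ₗ rTensor C (xi1 δ)

lemma a2'' (d c' : C) (w : C ⊗[k] A) (y : A ⊗[k] C) :
    ((TensorProduct.lid k A) (rTensor A δ ((TensorProduct.assoc k C C A).symm (d ⊗ₜ w)))) *
      ((TensorProduct.rid k A) (lTensor A δ ((TensorProduct.assoc k A C C) (y ⊗ₜ c')))) =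
      ximap δ ((d ⊗ₜ (lTensor C (mulRho y) w)) ⊗ₜ c') := by
  induction w using TensorProduct.induction_on with
  | zero => simp [ximap]
  | tmul e p =>
    induction y using TensorProduct.induction_on with
    | zero => simp [ximap, mulRho_zero]
    | tmul u f =>
      simp only [ximap, xi1, coe_comp, Function.comp_apply, LinearEquiv.coe_coe,
        assoc_symm_tmul, assoc_tmul, rTensor_tmul, lTensor_tmul, lid_tmul, rid_tmul,
        mulRho_apply, mulLeft_apply, map_smul, smul_tmul', tmul_smul, smul_smul,
        smul_mul_assoc, mul_smul_comm]
    | add y1 y2 h1 h2 =>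
      simp only [map_add, mul_add, h1, h2, mulRho_add, lTensor_add, LinearMap.add_apply,
        tmul_add, add_tmul]
  | add w1 w2 h1 h2 =>
    simp only [map_add, add_mul, h1, h2, tmul_add, add_tmul]

lemma a2' (hext : IsEntwinedExtension ψ ψinv ρ) (d c' : C) (x : A ⊗[k] A) :
    mul' k A (TensorProduct.map (gammaMap δ (leftCoact ψinv ρ)) (alphaMap δ ρ)
      ((TensorProduct.assoc k (C ⊗[k] A) A C)
        (((TensorProduct.assoc k C A A).symm (d ⊗ₜ x)) ⊗ₜ c'))) =
      ximap δ ((d ⊗ₜ Bmap ψinv ρ x) ⊗ₜ c') := by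
  induction x using TensorProduct.induction_on with
  | zero => simp [ximap, Bmap]
  | tmul p q =>
    rw [assoc_symm_tmul, assoc_tmul, map_tmul, mul'_apply, gamma_eq, alpha_eq,
      fmap2_apply, fmap_apply]
    have hb : Bmap ψinv ρ (p ⊗ₜ q) = lTensor C (mulRho (ρ q)) (leftCoact ψinv ρ p) := by
      simp only [Bmap, coe_comp, Function.comp_apply, LinearEquiv.coe_coe, rTensor_tmul]
      rw [E2c]
    rw [hb]
    exact a2'' δ d c' (leftCoact ψinv ρ p) (ρ q)
  | add x1 x2 h1 h2 =>
    simp only [tmul_add, add_tmul, map_add, h1, h2]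

lemma a3 (hext : IsEntwinedExtension ψ ψinv ρ) (σ : C →ₗ[k] A ⊗[k] A) (z : C ⊗[k] C) :
    mul' k A (TensorProduct.map (gammaMap δ (leftCoact ψinv ρ)) (alphaMap δ ρ)
      ((TensorProduct.assoc k (C ⊗[k] A) A C) (rTensor C (Smap σ) z))) =
      ximap δ (rTensor C (lTensor C (Bmap ψinv ρ ∘ₗ σ) ∘ₗ Coalgebra.comul (R := k)) z) := by
  induction z using TensorProduct.induction_on with
  | zero => simp
  | tmul c1 c2 =>
    rw [rTensor_tmul, rTensor_tmul, Smap_apply, LinearMap.comp_apply]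
    have sub : ∀ q : C ⊗[k] C,
        mul' k A (TensorProduct.map (gammaMap δ (leftCoact ψinv ρ)) (alphaMap δ ρ)
          ((TensorProduct.assoc k (C ⊗[k] A) A C)
            (((TensorProduct.assoc k C A A).symm (lTensor C σ q)) ⊗ₜ c2))) =
          ximap δ ((lTensor C (Bmap ψinv ρ ∘ₗ σ) q) ⊗ₜ c2) := by
      intro q
      induction q using TensorProduct.induction_on with
      | zero => simp [ximap]
      | tmul d c12 =>
        rw [lTensor_tmul, lTensor_tmul, LinearMap.comp_apply]
        exact a2' δ hext d c2 (σ c12)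
      | add q1 q2 h1 h2 => simp only [map_add, add_tmul, h1, h2]
    exact sub _
  | add z1 z2 h1 h2 => simp only [map_add, h1, h2]

lemma a4 (hext : IsEntwinedExtension ψ ψinv ρ) (v : C ⊗[k] C) :
    (TensorProduct.assoc k C A C) (rTensor C ψinv ((TensorProduct.assoc k A C C).symm
      ((1 : A) ⊗ₜ v))) = lTensor C (TensorProduct.mk k A C 1) v := by
  induction v using TensorProduct.induction_on with
  | zero => simp
  | tmul v1 v2 =>
    rw [assoc_symm_tmul, rTensor_tmul, psiinv_one hext, assoc_tmul, lTensor_tmul, mk_apply]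
  | add v1 v2 h1 h2 => simp only [tmul_add, map_add, h1, h2]

/-- `E5 c = Σ c₍₁₎ ⊗ (1 ⊗ c₍₂₎)`. -/
def E5map : C →ₗ[k] C ⊗[k] (A ⊗[k] C) :=
  lTensor C (TensorProduct.mk k A C 1) ∘ₗ Coalgebra.comul (R := k)

lemma Bmap_sigma (hext : IsEntwinedExtension ψ ψinv ρ) (σ : C →ₗ[k] A ⊗[k] A)
    (hσ : ∀ c : C, kappaMap ρ (σ c) = (1 : A) ⊗ₜ c) (c : C) :
    Bmap ψinv ρ (σ c) = E5map c := by
  rw [E2 hext, hσ c, lTensor_tmul, a4 hext, E5map, LinearMap.comp_apply]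

lemma a7a (w : C ⊗[k] C) (c2 : C) :
    ximap δ ((lTensor C E5map w) ⊗ₜ c2) =
      δ (((TensorProduct.lid k C) (rTensor C δ ((TensorProduct.assoc k C C C).symm
        (lTensor C (Coalgebra.comul (R := k)) w)))) ⊗ₜ c2) • (1 : A) := by
  induction w using TensorProduct.induction_on with
  | zero => simp [ximap]
  | tmul d1 d2 =>
    rw [lTensor_tmul, lTensor_tmul, E5map, LinearMap.comp_apply]
    have sub : ∀ v : C ⊗[k] C,
        ximap δ ((d1 ⊗ₜ (lTensor C (TensorProduct.mk k A C 1) v)) ⊗ₜ c2) =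
          δ (((TensorProduct.lid k C) (rTensor C δ ((TensorProduct.assoc k C C C).symm
            (d1 ⊗ₜ v)))) ⊗ₜ c2) • (1 : A) := by
      intro v
      induction v using TensorProduct.induction_on with
      | zero => simp [ximap]
      | tmul e1 e2 =>
        simp only [ximap, xi1, coe_comp, Function.comp_apply, LinearEquiv.coe_coe,
          lTensor_tmul, mk_apply, assoc_symm_tmul, rTensor_tmul, lid_tmul, assoc_tmul,
          rid_tmul, map_smul, smul_tmul', tmul_smul, smul_smul, smul_eq_mul]
        rw [← smul_tmul', map_smul, smul_eq_mul, mul_comm]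
      | add v1 v2 h1 h2 =>
        simp only [map_add, tmul_add, add_tmul, h1, h2, add_smul]
    exact sub _
  | add w1 w2 h1 h2 => simp only [map_add, tmul_add, add_tmul, h1, h2, add_smul]

/-- `G1m = (δ ⊗ C) ∘ (C ⊗ Δ) ∘ Δ`. -/
def G1m (δ : C ⊗[k] C →ₗ[k] k) : C →ₗ[k] C :=
  (TensorProduct.lid k C).toLinearMap ∘ₗ rTensor C δ ∘ₗ
    (TensorProduct.assoc k C C C).symm.toLinearMap ∘ₗ
    lTensor C (Coalgebra.comul (R := k)) ∘ₗ Coalgebra.comul (R := k)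

lemma a7b (hδ : IsCointegral δ) : G1m δ = LinearMap.id := by
  refine LinearMap.ext fun c => ?_
  simp only [G1m, coe_comp, Function.comp_apply, LinearEquiv.coe_coe, LinearMap.id_apply]
  rw [Coalgebra.coassoc_symm_apply, ← LinearMap.comp_apply (rTensor C δ), ← rTensor_comp,
    show δ ∘ₗ (Coalgebra.comul (R := k) : C →ₗ[k] C ⊗[k] C) = Coalgebra.counit from
      LinearMap.ext hδ.1,
    Coalgebra.rTensor_counit_comul, lid_tmul, one_smul]

lemma a8 (hδ : IsCointegral δ) (z : C ⊗[k] C) :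
    ximap δ (rTensor C (lTensor C E5map ∘ₗ Coalgebra.comul (R := k)) z) =
      δ (rTensor C (G1m δ) z) • (1 : A) := by
  induction z using TensorProduct.induction_on with
  | zero => simp
  | tmul c1 c2 =>
    rw [rTensor_tmul, rTensor_tmul, LinearMap.comp_apply, a7a]
    rfl
  | add z1 z2 h1 h2 => simp only [map_add, h1, h2, add_smul]

lemma part_aE (hext : IsEntwinedExtension ψ ψinv ρ) (hδ : IsCointegral δ)
    (σ : C →ₗ[k] A ⊗[k] A) (hσ : ∀ c : C, kappaMap ρ (σ c) = (1 : A) ⊗ₜ c) (c : C) :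
    mul' k A (ellMap σ (gammaMap δ (leftCoact ψinv ρ)) (alphaMap δ ρ) c) =
      Coalgebra.counit (R := k) c • (1 : A) := by
  rw [ell_comp, LinearMap.comp_apply, Nmap_apply, a3 δ hext σ,
    show Bmap ψinv ρ ∘ₗ σ = E5map from LinearMap.ext (Bmap_sigma hext σ hσ),
    a8 δ hδ, a7b δ hδ, rTensor_id, LinearMap.id_apply, hδ.1]

lemma part_a (hext : IsEntwinedExtension ψ ψinv ρ) (hδ : IsCointegral δ)
    (σ : C →ₗ[k] A ⊗[k] A) (hσ : ∀ c : C, kappaMap ρ (σ c) = (1 : A) ⊗ₜ c) (c : C) :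
    kappaMap ρ (ellMap σ (gammaMap δ (leftCoact ψinv ρ)) (alphaMap δ ρ) c) =
      (1 : A) ⊗ₜ c := by
  have hb := part_b δ hext hδ σ c
  simp only [kappaMap, coe_comp, Function.comp_apply, LinearEquiv.coe_coe]
  rw [← hb, LinearEquiv.symm_apply_apply, ← LinearMap.comp_apply (rTensor C (mul' k A)),
    ← rTensor_comp,
    show mul' k A ∘ₗ ellMap σ (gammaMap δ (leftCoact ψinv ρ)) (alphaMap δ ρ) =
        toSpanSingleton k A 1 ∘ₗ Coalgebra.counit (R := k) from
      LinearMap.ext fun c' => by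
        rw [LinearMap.comp_apply, LinearMap.comp_apply, part_aE δ hext hδ σ hσ c',
          toSpanSingleton_apply],
    rTensor_comp, LinearMap.comp_apply, Coalgebra.rTensor_counit_comul, rTensor_tmul,
    toSpanSingleton_apply, one_smul]

end Aux

/-- **Theorem (Beggs–Brzeziński).** If `B ⊆ A` is an entwined `C`-extension, `C` is
coseparable with cointegral `δ`, and the lifted canonical map `κ` has a `k`-linear
section `σ` (in particular `κ` is surjective), then
`ℓ = (γ ⊗ α) ∘ (C ⊗ σ ⊗ C) ∘ (Δ ⊗ C) ∘ Δ` is a strong connection form. -/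
theorem strong_connection_form
    (ψ : C ⊗[k] A →ₗ[k] A ⊗[k] C) (ψinv : A ⊗[k] C →ₗ[k] C ⊗[k] A)
    (ρ : A →ₗ[k] A ⊗[k] C)
    (hext : IsEntwinedExtension ψ ψinv ρ)
    (δ : C ⊗[k] C →ₗ[k] k) (hδ : IsCointegral δ)
    (hsurj : Function.Surjective (kappaMap ρ))
    (σ : C →ₗ[k] A ⊗[k] A) (hσ : ∀ c : C, kappaMap ρ (σ c) = (1 : A) ⊗ₜ c) :
    (∀ c : C,
      kappaMap ρ (ellMap σ (gammaMap δ (leftCoact ψinv ρ)) (alphaMap δ ρ) c) =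
        (1 : A) ⊗ₜ c) ∧
    (∀ c : C,
      (TensorProduct.assoc k A A C)
        (rTensor C (ellMap σ (gammaMap δ (leftCoact ψinv ρ)) (alphaMap δ ρ))
          (Coalgebra.comul (R := k) c)) =
      lTensor A ρ (ellMap σ (gammaMap δ (leftCoact ψinv ρ)) (alphaMap δ ρ) c)) ∧
    (∀ c : C,
      lTensor C (ellMap σ (gammaMap δ (leftCoact ψinv ρ)) (alphaMap δ ρ))
        (Coalgebra.comul (R := k) c) =
      (TensorProduct.assoc k C A A)
        (rTensor A (leftCoact ψinv ρ)
          (ellMap σ (gammaMap δ (leftCoact ψinv ρ)) (alphaMap δ ρ) c))) :=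
  ⟨fun c => part_a δ hext hδ σ hσ c, fun c => part_b δ hext hδ σ c,
    fun c => part_c δ hext hδ σ c⟩
end
end

section
/- Let B ⊆ A be an entwined C-extension and let δ be a cointegral on C. Then the map γ = (δ⊗A)∘(C⊗λ): C⊗A → A is left C-colinear, where C⊗A carries the left C-comodule structure Δ⊗A and A carries the induced left coaction λ; that is, (C⊗γ)∘(Δ⊗A) = λ∘γ. -/
open TensorProduct LinearMap

noncomputable section

variable {k : Type*} [Field k]
variable {A : Type*} [Ring A] [Algebra k A]
variable {C : Type*} [AddCommGroup C] [Module k C] [Coalgebra k C]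

section AuxLemmas
set_option linter.unusedSectionVars false

variable {k : Type*} [Field k]
variable {A : Type*} [Ring A] [Algebra k A]
variable {C : Type*} [AddCommGroup C] [Module k C] [Coalgebra k C]

/-- Multiplying the left tensor factor: `p · w` for `w : A ⊗ C`. -/
lemma aux_mul_w (p : A) (w : A ⊗[k] C) :
    rTensor C (mul' k A) ((TensorProduct.assoc k A A C).symm (p ⊗ₜ w)) =
      rTensor C (mulLeft k p) w := by
  induction w using TensorProduct.induction_on with
  | zero => simp
  | tmul e x => simp
  | add w1 w2 h1 h2 => simp [tmul_add, h1, h2]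

lemma aux_entRHS_tmul (ψ : C ⊗[k] A →ₗ[k] A ⊗[k] C) (p : A) (q : C) (b : A) :
    entRHS ψ ((p ⊗ₜ q) ⊗ₜ b) = rTensor C (mulLeft k p) (ψ (q ⊗ₜ b)) := by
  simp only [entRHS, coe_comp, LinearEquiv.coe_coe, Function.comp_apply,
    assoc_tmul, lTensor_tmul]
  exact aux_mul_w p (ψ (q ⊗ₜ b))

lemma aux_entRHS_mulLeft (ψ : C ⊗[k] A →ₗ[k] A ⊗[k] C) (a : A) (u : A ⊗[k] C) (b : A) :
    entRHS ψ ((rTensor C (mulLeft k a) u) ⊗ₜ b) =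
      rTensor C (mulLeft k a) (entRHS ψ (u ⊗ₜ b)) := by
  induction u using TensorProduct.induction_on with
  | zero => simp [zero_tmul]
  | tmul p q =>
    rw [rTensor_tmul, aux_entRHS_tmul, aux_entRHS_tmul, mulLeft_apply]
    generalize ψ (q ⊗ₜ[k] b) = w
    induction w using TensorProduct.induction_on with
    | zero => simp
    | tmul e x => simp [mul_assoc]
    | add w1 w2 h1 h2 => simp only [map_add, h1, h2]
  | add u1 u2 h1 h2 => simp only [map_add, add_tmul, h1, h2]

/-- The inner part of the left coaction: `κ_w(b) = b · w`. -/
def auxKappa (w : A ⊗[k] C) : A →ₗ[k] A ⊗[k] C :=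
  rTensor C (mul' k A) ∘ₗ (TensorProduct.assoc k A A C).symm.toLinearMap ∘ₗ
    (TensorProduct.mk k A (A ⊗[k] C)).flip w

lemma auxKappa_apply (w : A ⊗[k] C) (b : A) :
    auxKappa w b = rTensor C (mulLeft k b) w := by
  simp only [auxKappa, coe_comp, LinearEquiv.coe_coe, Function.comp_apply,
    flip_apply, mk_apply]
  exact aux_mul_w b w

lemma leftCoact_eq (ψinv : A ⊗[k] C →ₗ[k] C ⊗[k] A) (ρ : A →ₗ[k] A ⊗[k] C) :
    leftCoact ψinv ρ = ψinv ∘ₗ auxKappa (ρ 1) := rfl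

/-- Step (2): rewriting `(ψ ⊗ C)(C ⊗ κ_w)` through `ψ` using the multiplicativity. -/
lemma aux_step2 (ψ : C ⊗[k] A →ₗ[k] A ⊗[k] C)
    (hmul : ∀ (c : C) (a a' : A), ψ (c ⊗ₜ (a * a')) = entRHS ψ (ψ (c ⊗ₜ a) ⊗ₜ a'))
    (w : A ⊗[k] C) (z : C ⊗[k] A) :
    rTensor C ψ ((TensorProduct.assoc k C A C).symm (lTensor C (auxKappa w) z)) =
      rTensor C (entRHS ψ) ((TensorProduct.assoc k (A ⊗[k] C) A C).symm (ψ z ⊗ₜ w)) := by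
  induction z using TensorProduct.induction_on with
  | zero => simp
  | tmul c b =>
    rw [lTensor_tmul]
    induction w using TensorProduct.induction_on with
    | zero => simp [auxKappa]
    | tmul e x =>
      have : auxKappa (e ⊗ₜ[k] x) b = (b * e) ⊗ₜ[k] x := by
        rw [auxKappa_apply]; simp
      rw [this, assoc_symm_tmul, rTensor_tmul, assoc_symm_tmul, rTensor_tmul, hmul]
    | add w1 w2 h1 h2 =>
      have : auxKappa (w1 + w2) (b:A) = auxKappa w1 b + auxKappa w2 b := by
        simp [auxKappa, tmul_add]
      rw [this, tmul_add, map_add, map_add, h1, h2, tmul_add, map_add, map_add]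
  | add z1 z2 h1 h2 => simp only [map_add, add_tmul, h1, h2]

/-- Step: `(entRHS ψ)(ρ(1) ⊗ -) = ρ`. -/
lemma aux_entRHS_rho (ψ : C ⊗[k] A →ₗ[k] A ⊗[k] C) (ρ : A →ₗ[k] A ⊗[k] C)
    (hK1 : ∀ b : A, ρ b = entRHS ψ (ρ 1 ⊗ₜ b)) (w : A ⊗[k] C) :
    rTensor C (entRHS ψ) ((TensorProduct.assoc k (A ⊗[k] C) A C).symm (ρ 1 ⊗ₜ w)) =
      rTensor C ρ w := by
  induction w using TensorProduct.induction_on with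
  | zero => simp
  | tmul e x => rw [assoc_symm_tmul, rTensor_tmul, rTensor_tmul, hK1 e]
  | add w1 w2 h1 h2 => simp only [tmul_add, map_add, h1, h2]

lemma aux_entRHS_shift (ψ : C ⊗[k] A →ₗ[k] A ⊗[k] C) (a : A) (u w : A ⊗[k] C) :
    rTensor C (entRHS ψ)
        ((TensorProduct.assoc k (A ⊗[k] C) A C).symm ((rTensor C (mulLeft k a) u) ⊗ₜ w)) =
      rTensor C (rTensor C (mulLeft k a))
        (rTensor C (entRHS ψ) ((TensorProduct.assoc k (A ⊗[k] C) A C).symm (u ⊗ₜ w))) := by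
  induction w using TensorProduct.induction_on with
  | zero => simp
  | tmul e x =>
    rw [assoc_symm_tmul, assoc_symm_tmul, rTensor_tmul, rTensor_tmul, rTensor_tmul,
      aux_entRHS_mulLeft]
  | add w1 w2 h1 h2 => simp only [tmul_add, map_add, h1, h2]

lemma aux_assoc_nat (f : A →ₗ[k] A) (t : (A ⊗[k] C) ⊗[k] C) :
    TensorProduct.assoc k A C C (rTensor C (rTensor C f) t) =
      rTensor (C ⊗[k] C) f (TensorProduct.assoc k A C C t) := by
  induction t using TensorProduct.induction_on with
  | zero => simp
  | tmul y x =>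
    induction y using TensorProduct.induction_on with
    | zero => simp [zero_tmul]
    | tmul p q => simp
    | add y1 y2 h1 h2 => simp only [map_add, add_tmul, h1, h2]
  | add t1 t2 h1 h2 => simp only [map_add, h1, h2]

lemma aux_lr_comm (f : A →ₗ[k] A) (g : C →ₗ[k] C ⊗[k] C) (w : A ⊗[k] C) :
    rTensor (C ⊗[k] C) f (lTensor A g w) = lTensor A g (rTensor C f w) := by
  induction w using TensorProduct.induction_on with
  | zero => simp
  | tmul e x => simp
  | add w1 w2 h1 h2 => simp only [map_add, h1, h2]

lemma aux_rTensor_cancel (ψ : C ⊗[k] A →ₗ[k] A ⊗[k] C) (ψinv : A ⊗[k] C →ₗ[k] C ⊗[k] A)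
    (hli : ∀ x : C ⊗[k] A, ψinv (ψ x) = x) (t : (C ⊗[k] A) ⊗[k] C) :
    rTensor C ψinv (rTensor C ψ t) = t := by
  induction t using TensorProduct.induction_on with
  | zero => simp
  | tmul z x => rw [rTensor_tmul, rTensor_tmul, hli]
  | add t1 t2 h1 h2 => simp only [map_add, h1, h2]

lemma aux_lTensor_cancel (ψ : C ⊗[k] A →ₗ[k] A ⊗[k] C) (ψinv : A ⊗[k] C →ₗ[k] C ⊗[k] A)
    (hli : ∀ x : C ⊗[k] A, ψinv (ψ x) = x) (t : C ⊗[k] (C ⊗[k] A)) :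
    lTensor C ψinv (lTensor C ψ t) = t := by
  induction t using TensorProduct.induction_on with
  | zero => simp
  | tmul c z => rw [lTensor_tmul, lTensor_tmul, hli]
  | add t1 t2 h1 h2 => simp only [map_add, h1, h2]

/-- Map form of the comultiplication compatibility of `ψ`. -/
lemma aux_comul_compat_all (ψ : C ⊗[k] A →ₗ[k] A ⊗[k] C)
    (h : ∀ (c : C) (a : A),
      lTensor A (Coalgebra.comul (R := k)) (ψ (c ⊗ₜ a)) =
        (TensorProduct.assoc k A C C)
          (rTensor C ψ ((TensorProduct.assoc k C A C).symm
            (lTensor C ψ ((TensorProduct.assoc k C C A)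
              ((Coalgebra.comul (R := k) c) ⊗ₜ a))))))
    (z : C ⊗[k] A) :
    lTensor A (Coalgebra.comul (R := k)) (ψ z) =
      (TensorProduct.assoc k A C C)
        (rTensor C ψ ((TensorProduct.assoc k C A C).symm
          (lTensor C ψ ((TensorProduct.assoc k C C A)
            (rTensor A (Coalgebra.comul (R := k)) z))))) := by
  induction z using TensorProduct.induction_on with
  | zero => simp
  | tmul c a => rw [rTensor_tmul]; exact h c a
  | add z1 z2 h1 h2 => simp only [map_add, h1, h2]

end AuxLemmas

section MainAux
set_option linter.unusedSectionVars false

variable {k : Type*} [Field k]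
variable {A : Type*} [Ring A] [Algebra k A]
variable {C : Type*} [AddCommGroup C] [Module k C] [Coalgebra k C]

lemma aux_lTensor_lam (ψinv : A ⊗[k] C →ₗ[k] C ⊗[k] A) (ρ : A →ₗ[k] A ⊗[k] C)
    (t : C ⊗[k] A) :
    lTensor C ψinv (lTensor C (auxKappa (ρ 1)) t) = lTensor C (leftCoact ψinv ρ) t := by
  induction t using TensorProduct.induction_on with
  | zero => simp
  | tmul c b =>
    rw [lTensor_tmul, lTensor_tmul, lTensor_tmul]
    rfl
  | add t1 t2 h1 h2 => simp only [map_add, h1, h2]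

/-- Coassociativity of the induced left coaction. -/
lemma leftCoact_coassoc (ψ : C ⊗[k] A →ₗ[k] A ⊗[k] C) (ψinv : A ⊗[k] C →ₗ[k] C ⊗[k] A)
    (ρ : A →ₗ[k] A ⊗[k] C) (hext : IsEntwinedExtension ψ ψinv ρ) (a : A) :
    lTensor C (leftCoact ψinv ρ) (leftCoact ψinv ρ a) =
      TensorProduct.assoc k C C A
        (rTensor A (Coalgebra.comul (R := k)) (leftCoact ψinv ρ a)) := by
  have hψlam : ∀ b : A, ψ (leftCoact ψinv ρ b) = auxKappa (ρ 1) b := by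
    intro b
    rw [leftCoact_eq]
    exact hext.right_inv _
  have hK1 : ∀ b : A, ρ b = entRHS ψ (ρ 1 ⊗ₜ b) := by
    intro b; rw [← hext.mul_coact 1 b, one_mul]
  -- E1 : ★
  have E1 : lTensor A (Coalgebra.comul (R := k)) (auxKappa (ρ 1) a) =
      TensorProduct.assoc k A C C (rTensor C ψ ((TensorProduct.assoc k C A C).symm
        (lTensor C (auxKappa (ρ 1)) (leftCoact ψinv ρ a)))) := by
    rw [aux_step2 ψ hext.entwining.mul_compat (ρ 1) (leftCoact ψinv ρ a), hψlam a,
      auxKappa_apply, aux_entRHS_shift, aux_entRHS_rho ψ ρ hK1, aux_assoc_nat,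
      hext.coaction.coassoc 1, aux_lr_comm, ← auxKappa_apply]
  -- E2 : comul compatibility
  have E2 : lTensor A (Coalgebra.comul (R := k)) (auxKappa (ρ 1) a) =
      TensorProduct.assoc k A C C (rTensor C ψ ((TensorProduct.assoc k C A C).symm
        (lTensor C ψ (TensorProduct.assoc k C C A
          (rTensor A (Coalgebra.comul (R := k)) (leftCoact ψinv ρ a)))))) := by
    rw [← hψlam a]
    exact aux_comul_compat_all ψ hext.entwining.comul_compat (leftCoact ψinv ρ a)
  have h2 := (TensorProduct.assoc k A C C).injective (E1.symm.trans E2)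
  have h3 := congrArg (rTensor C ψinv) h2
  rw [aux_rTensor_cancel ψ ψinv hext.left_inv, aux_rTensor_cancel ψ ψinv hext.left_inv] at h3
  have h4 := (TensorProduct.assoc k C A C).symm.injective h3
  have h5 := congrArg (lTensor C ψinv) h4
  rw [aux_lTensor_lam ψinv ρ, aux_lTensor_cancel ψ ψinv hext.left_inv] at h5
  exact h5

def auxTheta (δ : C ⊗[k] C →ₗ[k] k) : (C ⊗[k] C) ⊗[k] (C ⊗[k] A) →ₗ[k] C ⊗[k] A :=
  lTensor C ((TensorProduct.lid k A).toLinearMap ∘ₗ rTensor A δ ∘ₗ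
      (TensorProduct.assoc k C C A).symm.toLinearMap) ∘ₗ
    (TensorProduct.assoc k C C (C ⊗[k] A)).toLinearMap

def auxPsi (δ : C ⊗[k] C →ₗ[k] k) (c : C) : C ⊗[k] (C ⊗[k] A) →ₗ[k] C ⊗[k] A :=
  (TensorProduct.lid k (C ⊗[k] A)).toLinearMap ∘ₗ
    rTensor (C ⊗[k] A) (δ ∘ₗ TensorProduct.mk k C C c)

lemma aux_F1 (δ : C ⊗[k] C →ₗ[k] k) (lam : A →ₗ[k] C ⊗[k] A) (c : C) (v : C ⊗[k] A) :
    lam ((TensorProduct.lid k A)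
        (rTensor A δ ((TensorProduct.assoc k C C A).symm (c ⊗ₜ v)))) =
      auxPsi δ c (lTensor C lam v) := by
  induction v using TensorProduct.induction_on with
  | zero => simp [auxPsi]
  | tmul d b => simp [auxPsi]
  | add v1 v2 h1 h2 => simp only [tmul_add, map_add, h1, h2]

lemma aux_F2 (δ : C ⊗[k] C →ₗ[k] k) (lam : A →ₗ[k] C ⊗[k] A) (a : A) (u : C ⊗[k] C) :
    lTensor C (gammaMap δ lam) (TensorProduct.assoc k C C A (u ⊗ₜ a)) =
      auxTheta δ (u ⊗ₜ lam a) := by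
  induction u using TensorProduct.induction_on with
  | zero => simp [zero_tmul]
  | tmul x y => simp [auxTheta, gammaMap]
  | add u1 u2 h1 h2 => simp only [add_tmul, map_add, h1, h2]

lemma aux_F3 (δ : C ⊗[k] C →ₗ[k] k) (u : C ⊗[k] C) (d : C) (b : A) :
    auxTheta (A := A) δ (u ⊗ₜ (d ⊗ₜ b)) =
      (TensorProduct.rid k C (lTensor C δ (TensorProduct.assoc k C C C (u ⊗ₜ d)))) ⊗ₜ b := by
  induction u using TensorProduct.induction_on with
  | zero => simp [zero_tmul]
  | tmul x y => simp [auxTheta, smul_tmul']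
  | add u1 u2 h1 h2 => simp only [add_tmul, map_add, h1, h2, add_tmul]

lemma aux_F4 (δ : C ⊗[k] C →ₗ[k] k) (c : C) (w : C ⊗[k] C) (b : A) :
    auxPsi δ c (TensorProduct.assoc k C C A (w ⊗ₜ b)) =
      (TensorProduct.lid k C
        (rTensor C δ ((TensorProduct.assoc k C C C).symm (c ⊗ₜ w)))) ⊗ₜ b := by
  induction w using TensorProduct.induction_on with
  | zero => simp [zero_tmul]
  | tmul d1 d2 => simp [auxPsi, smul_tmul']
  | add w1 w2 h1 h2 => simp only [add_tmul, tmul_add, map_add, h1, h2]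

lemma aux_F5 (δ : C ⊗[k] C →ₗ[k] k)
    (hδ2 : ∀ c c' : C,
      (TensorProduct.rid k C) (lTensor C δ ((TensorProduct.assoc k C C C)
        ((Coalgebra.comul (R := k) c) ⊗ₜ c'))) =
      (TensorProduct.lid k C) (rTensor C δ ((TensorProduct.assoc k C C C).symm
        (c ⊗ₜ (Coalgebra.comul (R := k) c')))))
    (c : C) (v : C ⊗[k] A) :
    auxTheta δ ((Coalgebra.comul (R := k) c) ⊗ₜ v) =
      auxPsi δ c (TensorProduct.assoc k C C A (rTensor A (Coalgebra.comul (R := k)) v)) := by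
  induction v using TensorProduct.induction_on with
  | zero => simp [tmul_zero]
  | tmul d b => rw [aux_F3, rTensor_tmul, aux_F4, hδ2 c d]
  | add v1 v2 h1 h2 => simp only [tmul_add, map_add, h1, h2]

end MainAux


/-- In an entwined `C`-extension with cointegral `δ`, the map
`γ = (δ ⊗ A) ∘ (C ⊗ λ) : C ⊗ A → A` is left `C`-colinear:
`(C ⊗ γ) ∘ (Δ ⊗ A) = λ ∘ γ`. -/
theorem gammaMap_left_colinear
    (ψ : C ⊗[k] A →ₗ[k] A ⊗[k] C) (ψinv : A ⊗[k] C →ₗ[k] C ⊗[k] A)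
    (ρ : A →ₗ[k] A ⊗[k] C)
    (hext : IsEntwinedExtension ψ ψinv ρ)
    (δ : C ⊗[k] C →ₗ[k] k) (hδ : IsCointegral δ) :
    ∀ (c : C) (a : A),
      lTensor C (gammaMap δ (leftCoact ψinv ρ))
        ((TensorProduct.assoc k C C A) ((Coalgebra.comul (R := k) c) ⊗ₜ a)) =
      leftCoact ψinv ρ (gammaMap δ (leftCoact ψinv ρ) (c ⊗ₜ a)) := by
  intro c a
  have hg : gammaMap δ (leftCoact ψinv ρ) (c ⊗ₜ a) =
      (TensorProduct.lid k A) (rTensor A δ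
        ((TensorProduct.assoc k C C A).symm (c ⊗ₜ leftCoact ψinv ρ a))) := by
    simp [gammaMap]
  rw [hg, aux_F1 δ (leftCoact ψinv ρ) c (leftCoact ψinv ρ a),
    leftCoact_coassoc ψ ψinv ρ hext a, ← aux_F5 δ hδ.2 c (leftCoact ψinv ρ a),
    ← aux_F2 δ (leftCoact ψinv ρ) a (Coalgebra.comul (R := k) c)]
end
end

section
/- Let B ⊆ A be an entwined C-extension and let δ be a cointegral on C. Then the map α = (A⊗δ)∘(ρ⊗C): A⊗C → A is right C-colinear, where A⊗C carries the right C-comodule structure A⊗Δ and A carries the right coaction ρ; that is, (α⊗C)∘(A⊗Δ) = ρ∘α. -/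
open TensorProduct LinearMap

noncomputable section

variable {k : Type*} [Field k]
variable {A : Type*} [Ring A] [Algebra k A]
variable {C : Type*} [AddCommGroup C] [Module k C] [Coalgebra k C]

/-- In an entwined `C`-extension with cointegral `δ`, the map
`α = (A ⊗ δ) ∘ (ρ ⊗ C) : A ⊗ C → A` is right `C`-colinear:
`(α ⊗ C) ∘ (A ⊗ Δ) = ρ ∘ α`. -/
theorem alphaMap_right_colinear
    (ψ : C ⊗[k] A →ₗ[k] A ⊗[k] C) (ψinv : A ⊗[k] C →ₗ[k] C ⊗[k] A)
    (ρ : A →ₗ[k] A ⊗[k] C)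
    (hext : IsEntwinedExtension ψ ψinv ρ)
    (δ : C ⊗[k] C →ₗ[k] k) (hδ : IsCointegral δ) :
    ∀ (a : A) (c : C),
      rTensor C (alphaMap δ ρ)
        ((TensorProduct.assoc k A C C).symm (a ⊗ₜ (Coalgebra.comul (R := k) c))) =
      ρ (alphaMap δ ρ (a ⊗ₜ c)) := by
  intro a c
  -- `m : C ⊗ (C ⊗ C) → C`, `y ⊗ (u ⊗ v) ↦ δ(y ⊗ u) • v`
  set m : C ⊗[k] (C ⊗[k] C) →ₗ[k] C :=
    (TensorProduct.lid k C).toLinearMap ∘ₗ rTensor C δ ∘ₗ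
      (TensorProduct.assoc k C C C).symm.toLinearMap with hm
  -- `B : (A ⊗ C) ⊗ (C ⊗ C) → A ⊗ C`, `(x ⊗ y) ⊗ (u ⊗ v) ↦ δ(y ⊗ u) • (x ⊗ v)`
  set B : (A ⊗[k] C) ⊗[k] (C ⊗[k] C) →ₗ[k] A ⊗[k] C :=
    lTensor A m ∘ₗ (TensorProduct.assoc k A C (C ⊗[k] C)).toLinearMap with hB
  -- `K2 : C ⊗ C → C`, `q ⊗ y ↦ δ(y ⊗ c) • q`
  set K2 : C ⊗[k] C →ₗ[k] C :=
    (TensorProduct.rid k C).toLinearMap ∘ₗ lTensor C δ ∘ₗ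
      (TensorProduct.assoc k C C C).toLinearMap ∘ₗ
      (TensorProduct.mk k (C ⊗[k] C) C).flip c with hK2
  have stepA : ∀ s : C ⊗[k] C,
      rTensor C (alphaMap δ ρ) ((TensorProduct.assoc k A C C).symm (a ⊗ₜ s))
        = B (ρ a ⊗ₜ s) := by
    intro s
    induction s using TensorProduct.induction_on with
    | zero => simp [tmul_zero]
    | tmul u v =>
      have key : ∀ t : A ⊗[k] C,
          (TensorProduct.rid k A)
              (lTensor A δ ((TensorProduct.assoc k A C C) (t ⊗ₜ u))) ⊗ₜ[k] v
            = B (t ⊗ₜ (u ⊗ₜ v)) := by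
        intro t
        induction t using TensorProduct.induction_on with
        | zero => simp
        | tmul x y =>
          simp [hB, hm, smul_tmul]
        | add p q hp hq =>
          simp only [add_tmul, map_add, TensorProduct.add_tmul] at *
          rw [hp, hq]
      have hα : alphaMap δ ρ (a ⊗ₜ u)
          = (TensorProduct.rid k A)
              (lTensor A δ ((TensorProduct.assoc k A C C) (ρ a ⊗ₜ u))) := by
        simp [alphaMap]
      simp only [TensorProduct.assoc_symm_tmul, rTensor_tmul, hα]
      exact key (ρ a)
    | add s s' hs hs' =>
      simp only [tmul_add, map_add, hs, hs']
  have stepB : ∀ t : A ⊗[k] C,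
      B (t ⊗ₜ (Coalgebra.comul (R := k) c))
        = lTensor A (K2 ∘ₗ (Coalgebra.comul (R := k) (A := C))) t := by
    intro t
    induction t using TensorProduct.induction_on with
    | zero => simp
    | tmul x y =>
      have h2 := hδ.2 y c
      simp only [hB, hm, hK2, LinearMap.comp_apply, LinearEquiv.coe_coe,
        TensorProduct.assoc_tmul, lTensor_tmul, LinearMap.flip_apply,
        TensorProduct.mk_apply] at h2 ⊢
      rw [← h2]
    | add p q hp hq =>
      simp only [add_tmul, map_add, hp, hq]
  have inner : ∀ (y : C) (r : A ⊗[k] C),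
      lTensor A K2 ((TensorProduct.assoc k A C C) (r ⊗ₜ y)) = δ (y ⊗ₜ c) • r := by
    intro y r
    induction r using TensorProduct.induction_on with
    | zero => simp
    | tmul p q =>
      simp [hK2, tmul_smul]
    | add p q hp hq =>
      simp only [add_tmul, map_add, hp, hq, smul_add]
  have hα : alphaMap δ ρ (a ⊗ₜ c)
      = (TensorProduct.rid k A)
          (lTensor A δ ((TensorProduct.assoc k A C C) (ρ a ⊗ₜ c))) := by
    simp [alphaMap]
  have stepC : lTensor A (K2 ∘ₗ (Coalgebra.comul (R := k) (A := C))) (ρ a)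
      = ρ (alphaMap δ ρ (a ⊗ₜ c)) := by
    have hco := hext.coaction.coassoc a
    rw [lTensor_comp, LinearMap.comp_apply, ← hco, hα]
    have h2 : ∀ t : A ⊗[k] C,
        lTensor A K2 ((TensorProduct.assoc k A C C) (rTensor C ρ t))
          = ρ ((TensorProduct.rid k A)
              (lTensor A δ ((TensorProduct.assoc k A C C) (t ⊗ₜ c)))) := by
      intro t
      induction t using TensorProduct.induction_on with
      | zero => simp
      | tmul x y =>
        rw [rTensor_tmul, inner y (ρ x)]
        simp [tmul_smul, map_smul]
      | add p q hp hq =>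
        simp only [add_tmul, map_add, hp, hq]
    exact h2 (ρ a)
  rw [stepA (Coalgebra.comul (R := k) c), stepB (ρ a), stepC]
end
end

section
/- Let B ⊆ A be an entwined C-extension with bijective entwining map ψ. Then the induced map λ: A → C⊗A, λ(a) = ψ⁻¹(a·ρ(1)), makes A a left C-comodule; that is, (Δ⊗A)∘λ = (C⊗λ)∘λ and (ε⊗A)∘λ = id_A. -/
open TensorProduct LinearMap

noncomputable section

variable {k : Type*} [Field k]
variable {A : Type*} [Ring A] [Algebra k A]
variable {C : Type*} [AddCommGroup C] [Module k C] [Coalgebra k C]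

set_option maxHeartbeats 4000000 in
/-- In an entwined `C`-extension, the induced map `λ(a) = ψ⁻¹(a · ρ(1))` makes `A`
a left `C`-comodule: `(Δ ⊗ A) ∘ λ = (C ⊗ λ) ∘ λ` and `(ε ⊗ A) ∘ λ = id`. -/
theorem leftCoact_is_left_comodule
    (ψ : C ⊗[k] A →ₗ[k] A ⊗[k] C) (ψinv : A ⊗[k] C →ₗ[k] C ⊗[k] A)
    (ρ : A →ₗ[k] A ⊗[k] C)
    (hext : IsEntwinedExtension ψ ψinv ρ) :
    (∀ a : A,
      (TensorProduct.assoc k C C A)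
        (rTensor A (Coalgebra.comul (R := k)) (leftCoact ψinv ρ a)) =
      lTensor C (leftCoact ψinv ρ) (leftCoact ψinv ρ a)) ∧
    (∀ a : A,
      (TensorProduct.lid k A)
        (rTensor A (Coalgebra.counit (R := k)) (leftCoact ψinv ρ a)) = a) := by
  obtain ⟨⟨hμ, h1, hΔ, hε⟩, ⟨hcoassoc, hcounit⟩, hli, hri, hμρ⟩ := hext
  -- notation
  -- key1 : a ⊗ w ↦ (μ ⊗ C)(assoc⁻¹ (a ⊗ w)) = (mulLeft a ⊗ C) w
  have key1 : ∀ (a : A) (w : A ⊗[k] C),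
      rTensor C (mul' k A) ((TensorProduct.assoc k A A C).symm (a ⊗ₜ w)) =
        rTensor C (mulLeft k a) w := by
    intro a w
    induction w using TensorProduct.induction_on with
    | zero => simp
    | tmul u d => simp
    | add w1 w2 h1' h2' => simp [tmul_add, map_add, h1', h2']
  have hψlam : ∀ a : A, ψ (leftCoact ψinv ρ a) = rTensor C (mulLeft k a) (ρ 1) := by
    intro a
    rw [leftCoact]
    simp only [LinearMap.comp_apply, LinearEquiv.coe_coe, LinearMap.flip_apply,
      TensorProduct.mk_apply]
    rw [hri, key1]
  -- entRHS on pure tensors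
  have hent3 : ∀ (p : A) (q : C) (u : A),
      entRHS ψ ((p ⊗ₜ q) ⊗ₜ u) = rTensor C (mulLeft k p) (ψ (q ⊗ₜ u)) := by
    intro p q u
    rw [entRHS]
    simp only [LinearMap.comp_apply, LinearEquiv.coe_coe, TensorProduct.assoc_tmul,
      lTensor_tmul]
    exact key1 p (ψ (q ⊗ₜ u))
  have hmulLeft_mul : ∀ (a u : A) (v : A ⊗[k] C),
      rTensor C (mulLeft k (a * u)) v = rTensor C (mulLeft k a) (rTensor C (mulLeft k u) v) := by
    intro a u v
    rw [LinearMap.mulLeft_mul, rTensor_comp, LinearMap.comp_apply]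
  have hentRHS_mulLeft : ∀ (a : A) (z : (A ⊗[k] C) ⊗[k] A),
      entRHS ψ (rTensor A (rTensor C (mulLeft k a)) z) =
        rTensor C (mulLeft k a) (entRHS ψ z) := by
    intro a z
    induction z using TensorProduct.induction_on with
    | zero => simp
    | tmul v u =>
      induction v using TensorProduct.induction_on with
      | zero => simp
      | tmul p q =>
        simp only [rTensor_tmul, mulLeft_apply]
        rw [hent3, hent3, hmulLeft_mul]
      | add v1 v2 h1' h2' =>
        simp only [map_add, add_tmul, h1', h2']
    | add z1 z2 h1' h2' => simp [map_add, h1', h2']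
  -- Q
  set Q : (A ⊗[k] C) ⊗[k] (A ⊗[k] C) →ₗ[k] A ⊗[k] (C ⊗[k] C) :=
    (TensorProduct.assoc k A C C).toLinearMap ∘ₗ rTensor C (entRHS ψ) ∘ₗ
      (TensorProduct.assoc k (A ⊗[k] C) A C).symm.toLinearMap with hQdef
  have hQ_tmul : ∀ (y1 : A ⊗[k] C) (u : A) (d : C),
      Q (y1 ⊗ₜ (u ⊗ₜ d)) = (TensorProduct.assoc k A C C) ((entRHS ψ (y1 ⊗ₜ u)) ⊗ₜ d) := by
    intro y1 u d
    simp [hQdef]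
  have hassoc_rT : ∀ (f : A →ₗ[k] A) (v : A ⊗[k] C) (d : C),
      (TensorProduct.assoc k A C C) ((rTensor C f v) ⊗ₜ d) =
        rTensor (C ⊗[k] C) f ((TensorProduct.assoc k A C C) (v ⊗ₜ d)) := by
    intro f v d
    induction v using TensorProduct.induction_on with
    | zero => simp
    | tmul p q => simp
    | add v1 v2 h1' h2' => simp only [map_add, add_tmul, tmul_add, h1', h2']
  have hQ_mulLeft : ∀ (a : A) (y1 y2 : A ⊗[k] C),
      Q ((rTensor C (mulLeft k a) y1) ⊗ₜ y2) =
        rTensor (C ⊗[k] C) (mulLeft k a) (Q (y1 ⊗ₜ y2)) := by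
    intro a y1 y2
    induction y2 using TensorProduct.induction_on with
    | zero => simp [tmul_zero]
    | tmul u d =>
      rw [hQ_tmul, hQ_tmul]
      have h6a : entRHS ψ ((rTensor C (mulLeft k a) y1) ⊗ₜ u) =
          rTensor C (mulLeft k a) (entRHS ψ (y1 ⊗ₜ u)) := by
        have := hentRHS_mulLeft a (y1 ⊗ₜ u)
        simpa using this
      rw [h6a, hassoc_rT]
    | add w1 w2 h1' h2' => simp only [map_add, add_tmul, tmul_add, h1', h2']
  have hQy : ∀ y2 : A ⊗[k] C, Q ((ρ 1) ⊗ₜ y2) = (TensorProduct.assoc k A C C) (rTensor C ρ y2) := by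
    intro y2
    induction y2 using TensorProduct.induction_on with
    | zero => simp [tmul_zero]
    | tmul u d =>
      rw [hQ_tmul]
      have : entRHS ψ ((ρ 1) ⊗ₜ u) = ρ u := by
        rw [← hμρ 1 u, one_mul]
      rw [this]
      simp
    | add w1 w2 h1' h2' => simp only [map_add, add_tmul, tmul_add, h1', h2']
  -- step lemma
  have hstep' : ∀ (c : C) (b : A) (w : A ⊗[k] C),
      (TensorProduct.assoc k A C C) (rTensor C ψ ((TensorProduct.assoc k C A C).symm
        (c ⊗ₜ (rTensor C (mulLeft k b) w)))) = Q ((ψ (c ⊗ₜ b)) ⊗ₜ w) := by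
    intro c b w
    induction w using TensorProduct.induction_on with
    | zero => simp [tmul_zero]
    | tmul u d =>
      rw [hQ_tmul]
      simp only [rTensor_tmul, mulLeft_apply, TensorProduct.assoc_symm_tmul]
      rw [← hμ c b u]
    | add w1 w2 h1' h2' => simp only [map_add, add_tmul, tmul_add, h1', h2']
  have hstep : ∀ x : C ⊗[k] A,
      (TensorProduct.assoc k A C C) (rTensor C ψ ((TensorProduct.assoc k C A C).symm
        (lTensor C (ψ ∘ₗ leftCoact ψinv ρ) x))) = Q ((ψ x) ⊗ₜ (ρ 1)) := by
    intro x
    induction x using TensorProduct.induction_on with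
    | zero => simp
    | tmul c b =>
      rw [lTensor_tmul, LinearMap.comp_apply, hψlam]
      exact hstep' c b (ρ 1)
    | add x1 x2 h1' h2' => simp only [map_add, add_tmul, tmul_add, h1', h2']
  -- comul compat upgraded
  have hΔ' : ∀ x : C ⊗[k] A,
      lTensor A (Coalgebra.comul (R := k)) (ψ x) =
        (TensorProduct.assoc k A C C) (rTensor C ψ ((TensorProduct.assoc k C A C).symm
          (lTensor C ψ ((TensorProduct.assoc k C C A)
            (rTensor A (Coalgebra.comul (R := k)) x))))) := by
    intro x
    induction x using TensorProduct.induction_on with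
    | zero => simp
    | tmul c b =>
      rw [rTensor_tmul]
      exact hΔ c b
    | add x1 x2 h1' h2' => simp only [map_add, h1', h2']
  have h4 : ∀ (a : A) (w : A ⊗[k] C),
      lTensor A (Coalgebra.comul (R := k)) (rTensor C (mulLeft k a) w) =
        rTensor (C ⊗[k] C) (mulLeft k a) (lTensor A (Coalgebra.comul (R := k)) w) := by
    intro a w
    induction w using TensorProduct.induction_on with
    | zero => simp
    | tmul u d => simp
    | add w1 w2 h1' h2' => simp only [map_add, h1', h2']
  -- cancellation facts
  have hψinvψ : ψinv ∘ₗ ψ = LinearMap.id := LinearMap.ext hli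
  have hlcancel : ∀ w : C ⊗[k] (C ⊗[k] A), lTensor C ψinv (lTensor C ψ w) = w := by
    intro w
    rw [← LinearMap.comp_apply, ← lTensor_comp, hψinvψ, lTensor_id, LinearMap.id_apply]
  have hrcancel : ∀ w : (C ⊗[k] A) ⊗[k] C, rTensor C ψinv (rTensor C ψ w) = w := by
    intro w
    rw [← LinearMap.comp_apply, ← rTensor_comp, hψinvψ, rTensor_id, LinearMap.id_apply]
  constructor
  · intro a
    -- apply Φ to both sides
    have hmain :
        (TensorProduct.assoc k A C C) (rTensor C ψ ((TensorProduct.assoc k C A C).symm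
          (lTensor C ψ ((TensorProduct.assoc k C C A)
            (rTensor A (Coalgebra.comul (R := k)) (leftCoact ψinv ρ a)))))) =
        (TensorProduct.assoc k A C C) (rTensor C ψ ((TensorProduct.assoc k C A C).symm
          (lTensor C ψ (lTensor C (leftCoact ψinv ρ) (leftCoact ψinv ρ a))))) := by
      rw [← hΔ' (leftCoact ψinv ρ a), hψlam, h4]
      have hcomp : lTensor C ψ (lTensor C (leftCoact ψinv ρ) (leftCoact ψinv ρ a)) =
          lTensor C (ψ ∘ₗ leftCoact ψinv ρ) (leftCoact ψinv ρ a) := by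
        rw [lTensor_comp, LinearMap.comp_apply]
      rw [hcomp]
      rw [hstep (leftCoact ψinv ρ a), hψlam, hQ_mulLeft, hQy]
      have h11 : lTensor A (Coalgebra.comul (R := k)) (ρ 1) =
          (TensorProduct.assoc k A C C) (rTensor C ρ (ρ 1)) := (hcoassoc 1).symm
      rw [h11]
    have h2 := congrArg (fun t => lTensor C ψinv ((TensorProduct.assoc k C A C)
      (rTensor C ψinv ((TensorProduct.assoc k A C C).symm t)))) hmain
    simpa [hrcancel, hlcancel] using h2
  · intro a
    have hεψ : ∀ x : C ⊗[k] A,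
        (TensorProduct.lid k A) (rTensor A (Coalgebra.counit (R := k)) x) =
          (TensorProduct.rid k A) (lTensor A (Coalgebra.counit (R := k)) (ψ x)) := by
      intro x
      induction x using TensorProduct.induction_on with
      | zero => simp
      | tmul c b => simp [hε c b]
      | add x1 x2 h1' h2' => simp only [map_add, h1', h2']
    rw [hεψ, hψlam]
    have hsub : ∀ (w : A ⊗[k] C),
        (TensorProduct.rid k A) (lTensor A (Coalgebra.counit (R := k))
          (rTensor C (mulLeft k a) w)) =
          a * (TensorProduct.rid k A) (lTensor A (Coalgebra.counit (R := k)) w) := by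
      intro w
      induction w using TensorProduct.induction_on with
      | zero => simp
      | tmul u d => simp [mul_smul_comm]
      | add w1 w2 h1' h2' => simp only [map_add, h1', h2', mul_add]
    rw [hsub, hcounit 1, mul_one]
end
end

section
/- Let B ⊆ A be an entwined C-extension, δ a cointegral on C, and σ: C → A⊗A a k-linear map with κ∘σ(c) = 1⊗c for all c ∈ C, where κ(a⊗a') = a·ρ(a'). Define γ = (δ⊗A)∘(C⊗λ), α = (A⊗δ)∘(ρ⊗C), and ℓ = (γ⊗α)∘(C⊗σ⊗C)∘(Δ⊗C)∘Δ. If σ is C-bicolinear, i.e. (σ⊗C)∘Δ = (A⊗ρ)∘σ and (C⊗σ)∘Δ = (λ⊗A)∘σ, then ℓ = σ. -/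
open TensorProduct LinearMap

noncomputable section

variable {k : Type*} [Field k]
variable {A : Type*} [Ring A] [Algebra k A]
variable {C : Type*} [AddCommGroup C] [Module k C] [Coalgebra k C]

/-- Auxiliary map contracting `δ` on the two left `C` legs:
`c ⊗ ((c' ⊗ a) ⊗ a') ↦ δ(c ⊗ c') • (a ⊗ a')`. -/
def deltaContract (δ : C ⊗[k] C →ₗ[k] k) :
    C ⊗[k] ((C ⊗[k] A) ⊗[k] A) →ₗ[k] A ⊗[k] A :=
  rTensor A (TensorProduct.lid k A).toLinearMap ∘ₗ rTensor A (rTensor A δ) ∘ₗ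
    rTensor A (TensorProduct.assoc k C C A).symm.toLinearMap ∘ₗ
    (TensorProduct.assoc k C (C ⊗[k] A) A).symm.toLinearMap

lemma deltaContract_tmul (δ : C ⊗[k] C →ₗ[k] k) (c c' : C) (a a' : A) :
    deltaContract (A := A) δ (c ⊗ₜ ((c' ⊗ₜ a) ⊗ₜ a')) = δ (c ⊗ₜ c') • (a ⊗ₜ a') := by
  simp [deltaContract, smul_tmul']

lemma gamma_rTensor_eq (δ : C ⊗[k] C →ₗ[k] k) (lam : A →ₗ[k] C ⊗[k] A) :
    rTensor A (gammaMap δ lam) ∘ₗ (TensorProduct.assoc k C A A).symm.toLinearMap =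
      deltaContract δ ∘ₗ lTensor C (rTensor A lam) := by
  ext c a a'
  simp only [AlgebraTensorModule.curry_apply, curry_apply, coe_restrictScalars, coe_comp,
    Function.comp_apply, LinearEquiv.coe_coe, TensorProduct.assoc_symm_tmul, rTensor_tmul,
    lTensor_tmul, gammaMap]
  induction lam a using TensorProduct.induction_on with
  | zero => simp
  | tmul c' b =>
      simp [deltaContract_tmul, smul_tmul']
  | add x y hx hy =>
      simp only [tmul_add, add_tmul, map_add] at hx hy ⊢
      rw [hx, hy]

lemma deltaContract_sigma_eq (δ : C ⊗[k] C →ₗ[k] k) (σ : C →ₗ[k] A ⊗[k] A) :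
    deltaContract δ ∘ₗ lTensor C (TensorProduct.assoc k C A A).symm.toLinearMap ∘ₗ
      lTensor C (lTensor C σ) ∘ₗ (TensorProduct.assoc k C C C).toLinearMap =
      σ ∘ₗ (TensorProduct.lid k C).toLinearMap ∘ₗ rTensor C δ := by
  ext c c' c''
  simp only [AlgebraTensorModule.curry_apply, curry_apply, coe_restrictScalars, coe_comp,
    Function.comp_apply, LinearEquiv.coe_coe, TensorProduct.assoc_tmul, lTensor_tmul,
    rTensor_tmul, TensorProduct.lid_tmul, map_smul]
  induction σ c'' using TensorProduct.induction_on with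
  | zero => simp
  | tmul a a' => simp [deltaContract_tmul]
  | add x y hx hy =>
      simp only [tmul_add, map_add, smul_add] at hx hy ⊢
      rw [hx, hy]

lemma map_gamma_alpha_eq (γ : C ⊗[k] A →ₗ[k] A) (α : A ⊗[k] C →ₗ[k] A)
    (lam : A →ₗ[k] C ⊗[k] A) :
    TensorProduct.map γ α ∘ₗ (TensorProduct.assoc k (C ⊗[k] A) A C).toLinearMap ∘ₗ
      rTensor C (rTensor A lam) ∘ₗ (TensorProduct.assoc k A A C).symm.toLinearMap =
      TensorProduct.map (γ ∘ₗ lam) α := by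
  ext a a' c
  simp only [AlgebraTensorModule.curry_apply, curry_apply, coe_restrictScalars, coe_comp,
    Function.comp_apply, LinearEquiv.coe_coe, TensorProduct.assoc_symm_tmul, rTensor_tmul,
    TensorProduct.map_tmul]
  induction lam a using TensorProduct.induction_on with
  | zero => simp
  | tmul c' b => simp
  | add x y hx hy =>
      simp only [add_tmul, map_add] at hx hy ⊢
      rw [hx, hy]

/-- If the section `σ` of the lifted canonical map is `C`-bicolinear, then the
strong connection form coincides with it: `ℓ = σ`. -/
theorem ell_of_bicolinear_section
    (ψ : C ⊗[k] A →ₗ[k] A ⊗[k] C) (ψinv : A ⊗[k] C →ₗ[k] C ⊗[k] A)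
    (ρ : A →ₗ[k] A ⊗[k] C)
    (hext : IsEntwinedExtension ψ ψinv ρ)
    (δ : C ⊗[k] C →ₗ[k] k) (hδ : IsCointegral δ)
    (σ : C →ₗ[k] A ⊗[k] A) (hσ : ∀ c : C, kappaMap ρ (σ c) = (1 : A) ⊗ₜ c)
    (hright : ∀ c : C,
      (TensorProduct.assoc k A A C) (rTensor C σ (Coalgebra.comul (R := k) c)) =
        lTensor A ρ (σ c))
    (hleft : ∀ c : C,
      lTensor C σ (Coalgebra.comul (R := k) c) =
        (TensorProduct.assoc k C A A) (rTensor A (leftCoact ψinv ρ) (σ c))) :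
    ellMap σ (gammaMap δ (leftCoact ψinv ρ)) (alphaMap δ ρ) = σ := by
  set lam := leftCoact ψinv ρ with hlam
  set γ := gammaMap δ lam with hγ
  set α := alphaMap δ ρ with hα
  have hδΔ : δ ∘ₗ (Coalgebra.comul (R := k) (A := C)) = Coalgebra.counit :=
    LinearMap.ext hδ.1
  -- `α ∘ ρ = id`
  have halpha : α ∘ₗ ρ = LinearMap.id := by
    refine LinearMap.ext fun a => ?_
    simp only [hα, alphaMap, coe_comp, Function.comp_apply, LinearEquiv.coe_coe, id_coe, id_eq]
    rw [hext.coaction.coassoc a, ← lTensor_comp_apply, hδΔ, hext.coaction.counit_id]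
  -- left colinearity, as a map identity
  have hP : (TensorProduct.assoc k C A A).symm.toLinearMap ∘ₗ lTensor C σ ∘ₗ
      (Coalgebra.comul (R := k)) = rTensor A lam ∘ₗ σ := by
    refine LinearMap.ext fun c => ?_
    simp only [coe_comp, Function.comp_apply, LinearEquiv.coe_coe]
    rw [hleft c, LinearEquiv.symm_apply_apply]
  -- right colinearity, as a map identity
  have hQ : rTensor C σ ∘ₗ (Coalgebra.comul (R := k)) =
      (TensorProduct.assoc k A A C).symm.toLinearMap ∘ₗ lTensor A ρ ∘ₗ σ := by
    refine LinearMap.ext fun c => ?_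
    simp only [coe_comp, Function.comp_apply, LinearEquiv.coe_coe]
    rw [← hright c, LinearEquiv.symm_apply_apply]
  -- key fact: `(γ ∘ lam) ⊗ A` restores `σ`
  have hfinal : ∀ c : C, rTensor A (γ ∘ₗ lam) (σ c) = σ c := by
    intro c
    rw [rTensor_comp_apply]
    have hPc : rTensor A lam (σ c) =
        (TensorProduct.assoc k C A A).symm (lTensor C σ (Coalgebra.comul c)) := by
      have := LinearMap.congr_fun hP c
      simpa [coe_comp, Function.comp_apply] using this.symm
    rw [hPc]
    have hK := LinearMap.congr_fun (gamma_rTensor_eq δ lam) (lTensor C σ (Coalgebra.comul c))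
    simp only [coe_comp, Function.comp_apply, LinearEquiv.coe_coe] at hK
    rw [hγ, hK, ← lTensor_comp_apply, ← hP]
    rw [lTensor_comp, lTensor_comp, coe_comp, coe_comp, Function.comp_apply,
      Function.comp_apply, ← Coalgebra.coassoc_apply c]
    have hG := LinearMap.congr_fun (deltaContract_sigma_eq δ σ)
      (rTensor C (Coalgebra.comul (R := k)) (Coalgebra.comul c))
    simp only [coe_comp, Function.comp_apply, LinearEquiv.coe_coe] at hG
    rw [hG, ← rTensor_comp_apply, hδΔ, Coalgebra.rTensor_counit_comul]
    simp
  -- main computation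
  refine LinearMap.ext fun c => ?_
  simp only [ellMap, coe_comp, Function.comp_apply, LinearEquiv.coe_coe]
  rw [← rTensor_comp_apply, ← rTensor_comp_apply, comp_assoc, hP, rTensor_comp_apply]
  have hQc : rTensor C σ (Coalgebra.comul c) =
      (TensorProduct.assoc k A A C).symm (lTensor A ρ (σ c)) := by
    have := LinearMap.congr_fun hQ c
    simpa [coe_comp, Function.comp_apply] using this
  rw [hQc]
  have hN := LinearMap.congr_fun (map_gamma_alpha_eq γ α lam) (lTensor A ρ (σ c))
  simp only [coe_comp, Function.comp_apply, LinearEquiv.coe_coe] at hN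
  rw [hN, ← comp_apply, LinearMap.map_comp_lTensor, halpha]
  exact hfinal c
end
end
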